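/- arXiv:1309.7550 — 5 statements merged into one kernel-verified Lean document; each statement's English description precedes it below -/
import Mathlib

section
/- Under the stationary product measure Q on {0,1}^ℤ with Q(ω_t = 1) = 1/2, the k-block containing the origin satisfies: for every finite interval J of positive integers, Q(diam(B^k(0)) ∈ J) ≤ (1/2)^{ℓ_k} · (max J) · P(T^k ∈ J), where T^k is the first-occurrence time of the word I_k in an i.i.d. Bernoulli(1/2) sequence. -/
/-!
Split the event according to the length `d` and the left end `b ∈ (-d, 0]` of the block
containing the origin. Since copies of `I_ℓ` cannot overlap, `[b, b + d)` is a block iff `I_ℓ`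
ends at `b` and the first copy of `I_ℓ` lying entirely right of `b` ends at `b + d`. These two
conditions read the disjoint windows `(b - ℓ, b]` and `(b, b + d]`, so under the product measure
the probability factorises as `2^{-ℓ}` times the probability that `I_ℓ` first occurs at time `d`
in a fresh Bernoulli sequence. Summing over the `d` choices of `b`, and bounding `d` by `max J`,
gives the claim.
-/

open MeasureTheory

/-- First time `j ≥ ℓ` (in an ℕ-indexed sequence) such that the window
`(j-ℓ+1,…,j)` equals the word `I_ℓ` of `ℓ-1` ones followed by a zero. -/
noncomputable def firstOcc (ℓ : ℕ) (e : ℕ → Bool) : ℕ :=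
  sInf {j | ℓ ≤ j ∧ ∀ i < ℓ, e (j - ℓ + 1 + i) = decide (i < ℓ - 1)}

/-- `b` is the right endpoint of an occurrence of the word `I_ℓ` (of `ℓ-1` ones
followed by a zero) in the environment `e : ℤ → Bool`, i.e. `I_ℓ` is seen
on `[b-ℓ+1, b]`. -/
def occEnd (ℓ : ℕ) (e : ℤ → Bool) (b : ℤ) : Prop :=
  ∀ i < ℓ, e (b - ℓ + 1 + i) = decide (i < ℓ - 1)

open Finset

section Cylinders

variable {I Ω : Type*} {X : I → Ω → Bool}

/-- A pattern on `t` is encoded by the set `u ⊆ t` of coordinates where it is `true`. -/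
lemma setOf_cylinder_and_eq_biUnion [DecidableEq I] {s t : Finset I} {P : (I → Bool) → Prop}
    [DecidablePred P] (hst : Disjoint s t) (hP : DependsOn P t) (w : I → Bool) :
    {ω | (∀ i ∈ s, X i ω = w i) ∧ P (fun i => X i ω)} =
      ⋃ u ∈ {u ∈ t.powerset | P (fun i => decide (i ∈ u))},
        {ω | ∀ i ∈ s ∪ t, X i ω = s.piecewise w (fun i => decide (i ∈ u)) i} := by
  ext ω
  simp only [Set.mem_ofPred_eq, Set.mem_iUnion, mem_filter, mem_powerset, exists_prop, mem_union]
  constructor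
  · rintro ⟨hs, hPω⟩
    refine ⟨{i ∈ t | X i ω}, ⟨filter_subset _ _, hP (fun i hi => ?_) ▸ hPω⟩, ?_⟩
    · simp [mem_coe.1 hi]
    · rintro i (hi | hi)
      · simp [hi, hs i hi]
      · simp [hi, disjoint_right.1 hst hi]
  · rintro ⟨u, ⟨-, hPu⟩, hω⟩
    refine ⟨fun i hi => by simpa [hi] using hω i (.inl hi), hP (fun i hi => ?_) ▸ hPu⟩
    simpa [disjoint_right.1 hst hi] using (hω i (.inr hi)).symm

variable [MeasurableSpace Ω]

lemma measurableSet_cylinder (hX : ∀ i, Measurable (X i)) (s : Finset I) (c : I → Bool) :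
    MeasurableSet {ω | ∀ i ∈ s, X i ω = c i} := by
  simp only [Set.ofPred_forall]
  exact s.measurableSet_biInter fun i _ => hX i (measurableSet_singleton _)

lemma measurableSet_setOf_of_dependsOn (hX : ∀ i, Measurable (X i)) {t : Finset I}
    {P : (I → Bool) → Prop} (hP : DependsOn P t) : MeasurableSet {ω | P (fun i => X i ω)} := by
  classical
  have := setOf_cylinder_and_eq_biUnion (X := X) (disjoint_empty_left t) hP fun _ => true
  simp only [notMem_empty, false_imp_iff, implies_true, true_and, empty_union] at this
  rw [this]
  exact Finset.measurableSet_biUnion _ fun u _ => measurableSet_cylinder hX _ _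

variable {μ : Measure Ω} [DecidableEq I] {s t : Finset I} {P : (I → Bool) → Prop}
  [DecidablePred P]

lemma measure_cylinder_and_eq (hX : ∀ i, Measurable (X i))
    (hunif : ∀ c : I → Bool, μ {ω | ∀ i ∈ s ∪ t, X i ω = c i} = (1 / 2) ^ #(s ∪ t))
    (hst : Disjoint s t) (hP : DependsOn P t) (w : I → Bool) :
    μ {ω | (∀ i ∈ s, X i ω = w i) ∧ P (fun i => X i ω)} =
      #{u ∈ t.powerset | P (fun i => decide (i ∈ u))} * (1 / 2) ^ (#s + #t) := by
  rw [setOf_cylinder_and_eq_biUnion hst hP, measure_biUnion_finset]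
  · rw [sum_congr rfl fun u _ => hunif _, sum_const, nsmul_eq_mul, card_union_of_disjoint hst]
  · intro u hu v hv huv
    refine Set.disjoint_left.2 fun ω hωu hωv => huv ?_
    ext i
    by_cases hi : i ∈ t
    · simpa [hi, disjoint_right.1 hst hi] using (hωu i (mem_union_right s hi)).symm.trans
        (hωv i (mem_union_right s hi))
    · simp only [coe_filter, mem_powerset, Set.mem_ofPred_eq] at hu hv
      exact iff_of_false (fun h => hi (hu.1 h)) (fun h => hi (hv.1 h))
  · exact fun u _ => measurableSet_cylinder hX _ _

lemma measure_setOf_eq (hX : ∀ i, Measurable (X i))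
    (hunif : ∀ c : I → Bool, μ {ω | ∀ i ∈ t, X i ω = c i} = (1 / 2) ^ #t)
    (hP : DependsOn P t) :
    μ {ω | P (fun i => X i ω)} =
      #{u ∈ t.powerset | P (fun i => decide (i ∈ u))} * (1 / 2) ^ #t := by
  simpa using measure_cylinder_and_eq hX (s := ∅) (by simpa using hunif) (disjoint_empty_left t)
    hP fun _ => true

end Cylinders

section Occurrences

variable {ℓ : ℕ} {e e' : ℤ → Bool} {b c : ℤ}

lemma occEnd_iff : occEnd ℓ e c ↔ ∀ i ∈ Ioc (c - ℓ) c, e i = decide (i < c) := by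
  constructor
  · intro h i hi
    rw [mem_Ioc] at hi
    obtain ⟨k, rfl⟩ : ∃ k : ℕ, i = c - ℓ + 1 + k := ⟨(i - (c - ℓ + 1)).toNat, by omega⟩
    rw [h k (by omega)]
    exact decide_eq_decide.2 (by omega)
  · intro h k hk
    rw [h _ (mem_Ioc.2 ⟨by omega, by omega⟩)]
    exact decide_eq_decide.2 (by omega)

lemma occEnd_congr (h : ∀ i ∈ Ioc (c - ℓ) c, e i = e' i) : occEnd ℓ e c ↔ occEnd ℓ e' c := by
  simp only [occEnd_iff]
  exact forall₂_congr fun i hi => by rw [h i hi]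

/-- Two occurrences of `I_ℓ` cannot overlap: the final zero of the earlier one would have to be
one of the leading ones of the later one. -/
lemma not_occEnd_of_lt_of_lt_add (hb : occEnd ℓ e b) (hbc : b < c) (hcb : c < b + ℓ) :
    ¬ occEnd ℓ e c := by
  intro hc
  have hb0 := occEnd_iff.1 hb b (mem_Ioc.2 ⟨by omega, le_rfl⟩)
  have hb1 := occEnd_iff.1 hc b (mem_Ioc.2 ⟨by omega, hbc.le⟩)
  simp_all

lemma occEnd_comp_sub : occEnd ℓ (fun t => e (t - b)) c ↔ occEnd ℓ e (c - b) :=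
  forall₂_congr fun i _ => by dsimp only; rw [show c - ℓ + 1 + i - b = c - b - ℓ + 1 + i by ring]

lemma occEnd_comp_toNat_iff (e : ℕ → Bool) {j : ℕ} (hj : ℓ ≤ j) :
    occEnd ℓ (fun t => e t.toNat) j ↔ ∀ i < ℓ, e (j - ℓ + 1 + i) = decide (i < ℓ - 1) :=
  forall₂_congr fun i _ => by
    dsimp only
    rw [show ((j : ℤ) - ℓ + 1 + i).toNat = j - ℓ + 1 + i by omega]

/-- The first occurrence of `I_ℓ` lying entirely to the right of `b` ends at `b + d`. -/
def IsFirstOccEnd (ℓ : ℕ) (e : ℤ → Bool) (b : ℤ) (d : ℕ) : Prop :=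
  ℓ ≤ d ∧ occEnd ℓ e (b + d) ∧ ∀ j : ℕ, ℓ ≤ j → j < d → ¬ occEnd ℓ e (b + j)

lemma dependsOn_isFirstOccEnd (ℓ : ℕ) (b : ℤ) (d : ℕ) :
    DependsOn (fun e => IsFirstOccEnd ℓ e b d) (Ioc b (b + d) : Set ℤ) := by
  intro e e' h
  have key : ∀ j : ℕ, ℓ ≤ j → j ≤ d → (occEnd ℓ e (b + j) ↔ occEnd ℓ e' (b + j)) :=
    fun j hj hjd => occEnd_congr fun i hi => h i <| by
      simp only [coe_Ioc, Set.mem_Ioc, mem_Ioc] at hi ⊢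
      omega
  exact propext <| and_congr_right fun hd => and_congr (key d hd le_rfl) <|
    forall_congr' fun j => imp_congr_right fun hj => imp_congr_right fun hjd =>
      not_congr (key j hj hjd.le)

lemma isFirstOccEnd_comp_sub {d : ℕ} :
    IsFirstOccEnd ℓ (fun t => e (t - b)) b d ↔ IsFirstOccEnd ℓ e 0 d := by
  simp only [IsFirstOccEnd, occEnd_comp_sub, add_sub_cancel_left, zero_add]

lemma IsFirstOccEnd.eq {d d' : ℕ} (h : IsFirstOccEnd ℓ e b d) (h' : IsFirstOccEnd ℓ e b d') :
    d = d' := by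
  by_contra hne
  rcases Nat.lt_or_gt_of_ne hne with hlt | hlt
  · exact h'.2.2 d h.1 hlt h.2.1
  · exact h.2.2 d' h'.1 hlt h'.2.1

lemma occEnd_and_isFirstOccEnd_iff (hℓ : 1 ≤ ℓ) {d : ℕ} (hd : 0 < d) :
    (occEnd ℓ e b ∧ occEnd ℓ e (b + d) ∧ ∀ c, b < c → c < b + d → ¬ occEnd ℓ e c) ↔
      occEnd ℓ e b ∧ IsFirstOccEnd ℓ e b d := by
  refine and_congr_right fun hb => ⟨fun ⟨hocc, hgap⟩ => ⟨?_, hocc, fun j hj hjd =>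
    hgap _ (by omega) (by omega)⟩, fun ⟨_, hocc, hfirst⟩ => ⟨hocc, fun c hbc hcd hc => ?_⟩⟩
  · by_contra! h
    exact not_occEnd_of_lt_of_lt_add hb (by omega) (by omega) hocc
  · obtain ⟨j, rfl⟩ : ∃ j : ℕ, c = b + j := ⟨(c - b).toNat, by omega⟩
    by_cases hj : ℓ ≤ j
    · exact hfirst j hj (by omega) hc
    · exact not_occEnd_of_lt_of_lt_add hb hbc (by omega) hc

lemma exists_isFirstOccEnd_of_block (hℓ : 1 ≤ ℓ) {J : Finset ℕ}
    (h : ∃ b b' : ℤ, occEnd ℓ e b ∧ occEnd ℓ e b' ∧ b ≤ 0 ∧ 0 < b' ∧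
      (∀ c, b < c → c < b' → ¬ occEnd ℓ e c) ∧ (b' - b).toNat ∈ J) :
    ∃ d ∈ J, ∃ b ∈ Ioc (-(d : ℤ)) 0, occEnd ℓ e b ∧ IsFirstOccEnd ℓ e b d := by
  obtain ⟨b, b', hb, hb', hb0, hb'0, hgap, hJ⟩ := h
  obtain ⟨d, rfl⟩ : ∃ d : ℕ, b' = b + d := ⟨(b' - b).toNat, by omega⟩
  exact ⟨d, by simpa using hJ, b, mem_Ioc.2 ⟨by omega, hb0⟩,
    (occEnd_and_isFirstOccEnd_iff hℓ (by omega)).1 ⟨hb, hb', hgap⟩⟩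

lemma firstOcc_eq_of_isFirstOccEnd {e : ℕ → Bool} {d : ℕ}
    (h : IsFirstOccEnd ℓ (fun t => e t.toNat) 0 d) : firstOcc ℓ e = d := by
  obtain ⟨hd, hocc, hfirst⟩ := h
  simp only [zero_add] at hocc hfirst
  refine IsLeast.csInf_eq ⟨⟨hd, (occEnd_comp_toNat_iff e hd).1 hocc⟩, fun j ⟨hj, hw⟩ => ?_⟩
  exact not_lt.1 fun hjd => hfirst j hj hjd ((occEnd_comp_toNat_iff e hj).2 hw)

end Occurrences

lemma measure_cylinder_comp_toNat_sub {Ω : Type*} [MeasurableSpace Ω] {μ : Measure Ω}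
    {η : ℕ → Ω → Bool}
    (hiid : ∀ (s : Finset ℕ) (c : ℕ → Bool), μ {ω | ∀ i ∈ s, η i ω = c i} = (1 / 2) ^ #s)
    {b : ℤ} {u : Finset ℤ} (hu : ∀ i ∈ u, b ≤ i) (c : ℤ → Bool) :
    μ {ω | ∀ i ∈ u, η (i - b).toNat ω = c i} = (1 / 2) ^ #u := by
  have hinj : Set.InjOn (fun i => (i - b).toNat) u := fun i hi j hj h => by
    have := hu i hi; have := hu j hj; simp only at h; omega
  have hset : {ω | ∀ i ∈ u, η (i - b).toNat ω = c i} =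
      {ω | ∀ n ∈ u.image (fun i => (i - b).toNat), η n ω = c (b + n)} := by
    ext ω
    simp only [Set.mem_ofPred_eq, forall_mem_image]
    refine forall₂_congr fun i hi => ?_
    rw [show b + ((i - b).toNat : ℤ) = i by have := hu i hi; omega]
  rw [hset, hiid, card_image_of_injOn hinj]

lemma measure_occEnd_and_isFirstOccEnd {Ω Ω' : Type*} [MeasurableSpace Ω] [MeasurableSpace Ω']
    {μ : Measure Ω} {μ' : Measure Ω'} {env : ℤ → Ω → Bool} {η : ℕ → Ω' → Bool}
    (hmeas_env : ∀ i, Measurable (env i)) (hmeas : ∀ i, Measurable (η i))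
    (hiid_env : ∀ (s : Finset ℤ) (c : ℤ → Bool),
      μ {ω | ∀ i ∈ s, env i ω = c i} = (1 / 2) ^ #s)
    (hiid : ∀ (s : Finset ℕ) (c : ℕ → Bool), μ' {ω | ∀ i ∈ s, η i ω = c i} = (1 / 2) ^ #s)
    (ℓ : ℕ) (b : ℤ) (d : ℕ) :
    μ {ω | occEnd ℓ (fun t => env t ω) b ∧ IsFirstOccEnd ℓ (fun t => env t ω) b d} =
      (1 / 2) ^ ℓ * μ' {ω | IsFirstOccEnd ℓ (fun t => η t.toNat ω) 0 d} := by
  classical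
  have hshift : {ω | IsFirstOccEnd ℓ (fun t => η t.toNat ω) 0 d} =
      {ω | IsFirstOccEnd ℓ (fun t => η (t - b).toNat ω) b d} :=
    Set.ext fun _ => isFirstOccEnd_comp_sub.symm
  simp only [occEnd_iff]
  rw [measure_cylinder_and_eq hmeas_env (hiid_env _) (Ioc_disjoint_Ioc_of_le le_rfl)
      (dependsOn_isFirstOccEnd ℓ b d), hshift,
    measure_setOf_eq (fun i => hmeas _)
      (measure_cylinder_comp_toNat_sub hiid fun i hi => (mem_Ioc.1 hi).1.le)
      (dependsOn_isFirstOccEnd ℓ b d)]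
  simp only [Int.card_Ioc, sub_sub_cancel, Int.toNat_natCast, add_sub_cancel_left, pow_add]
  ring

theorem stmt3_general {Ω Ω' : Type} [MeasurableSpace Ω] [MeasurableSpace Ω']
    (μ : Measure Ω) (μ' : Measure Ω')
    (ℓ : ℕ) (hℓ : 1 ≤ ℓ)
    (env : ℤ → Ω → Bool) (η : ℕ → Ω' → Bool)
    (hmeas_env : ∀ i, Measurable (env i)) (hmeas : ∀ i, Measurable (η i))
    (hiid_env : ∀ (s : Finset ℤ) (b : ℤ → Bool),
      μ {ω | ∀ i ∈ s, env i ω = b i} = (1 / 2 : ENNReal) ^ s.card)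
    (hiid : ∀ (s : Finset ℕ) (b : ℕ → Bool),
      μ' {ω | ∀ i ∈ s, η i ω = b i} = (1 / 2 : ENNReal) ^ s.card)
    (J : Finset ℕ) (hJ : J.Nonempty) :
    μ {ω | ∃ b b' : ℤ, occEnd ℓ (fun t => env t ω) b ∧ occEnd ℓ (fun t => env t ω) b' ∧
        b ≤ 0 ∧ 0 < b' ∧ (∀ c, b < c → c < b' → ¬ occEnd ℓ (fun t => env t ω) c) ∧
        (b' - b).toNat ∈ J}
      ≤ (1 / 2 : ENNReal) ^ ℓ * (J.max' hJ) *
          μ' {ω | firstOcc ℓ (fun i => η i ω) ∈ J} := by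
  let B (b : ℤ) (d : ℕ) : Set Ω :=
    {ω | occEnd ℓ (fun t => env t ω) b ∧ IsFirstOccEnd ℓ (fun t => env t ω) b d}
  let F (d : ℕ) : Set Ω' := {ω | IsFirstOccEnd ℓ (fun t => η t.toNat ω) 0 d}
  have hF : ⋃ d ∈ J, F d ⊆ {ω | firstOcc ℓ (fun i => η i ω) ∈ J} := by
    simp only [Set.iUnion_subset_iff]
    intro d hd ω hω
    rwa [Set.mem_ofPred_eq, firstOcc_eq_of_isFirstOccEnd (e := fun i => η i ω) hω]
  have hFdisj : (J : Set ℕ).PairwiseDisjoint F := fun d _ d' _ hne =>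
    Set.disjoint_left.2 fun ω hω hω' => hne (hω.eq hω')
  calc _ ≤ μ (⋃ d ∈ J, ⋃ b ∈ Ioc (-(d : ℤ)) 0, B b d) := measure_mono fun ω h => by
        obtain ⟨d, hd, b, hb, hB⟩ := exists_isFirstOccEnd_of_block hℓ h
        exact Set.mem_biUnion hd (Set.mem_biUnion hb hB)
    _ ≤ ∑ d ∈ J, ∑ b ∈ Ioc (-(d : ℤ)) 0, μ (B b d) := (measure_biUnion_finset_le _ _).trans <|
        sum_le_sum fun d _ => measure_biUnion_finset_le _ _
    _ = ∑ d ∈ J, d * ((1 / 2) ^ ℓ * μ' (F d)) := sum_congr rfl fun d _ => by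
        simp [B, F, measure_occEnd_and_isFirstOccEnd hmeas_env hmeas hiid_env hiid]
    _ ≤ ∑ d ∈ J, J.max' hJ * ((1 / 2) ^ ℓ * μ' (F d)) :=
        sum_le_sum fun d hd => by gcongr; exact J.le_max' d hd
    _ = (1 / 2) ^ ℓ * J.max' hJ * μ' (⋃ d ∈ J, F d) := by
        rw [measure_biUnion_finset hFdisj fun d _ =>
          measurableSet_setOf_of_dependsOn (fun i => hmeas _) (dependsOn_isFirstOccEnd ℓ 0 d),
          mul_sum]
        exact sum_congr rfl fun d _ => by ring
    _ ≤ _ := by gcongr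

/-- Size-biasing bound for the diameter of the `k`-block containing the origin:
`Q(diam(B^k(0)) ∈ J) ≤ (1/2)^{ℓ} ⋅ (max J) ⋅ P(T^k ∈ J)`, where `T^k` is
the first-occurrence time of `I_ℓ` in an i.i.d. Bernoulli(1/2) sequence. -/
theorem stmt3 {Ω Ω' : Type} [MeasurableSpace Ω] [MeasurableSpace Ω']
    (μ : Measure Ω) (μ' : Measure Ω') [IsProbabilityMeasure μ] [IsProbabilityMeasure μ']
    (ℓ : ℕ) (hℓ : 1 ≤ ℓ)
    (env : ℤ → Ω → Bool) (η : ℕ → Ω' → Bool)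
    (hmeas_env : ∀ i, Measurable (env i)) (hmeas : ∀ i, Measurable (η i))
    (hiid_env : ∀ (s : Finset ℤ) (b : ℤ → Bool),
      μ {ω | ∀ i ∈ s, env i ω = b i} = (1 / 2 : ENNReal) ^ s.card)
    (hiid : ∀ (s : Finset ℕ) (b : ℕ → Bool),
      μ' {ω | ∀ i ∈ s, η i ω = b i} = (1 / 2 : ENNReal) ^ s.card)
    (J : Finset ℕ) (hJ : J.Nonempty) :
    μ {ω | ∃ b b' : ℤ, occEnd ℓ (fun t => env t ω) b ∧ occEnd ℓ (fun t => env t ω) b' ∧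
        b ≤ 0 ∧ 0 < b' ∧ (∀ c, b < c → c < b' → ¬ occEnd ℓ (fun t => env t ω) c) ∧
        (b' - b).toNat ∈ J}
      ≤ (1 / 2 : ENNReal) ^ ℓ * (J.max' hJ) *
          μ' {ω | firstOcc ℓ (fun i => η i ω) ∈ J} :=
  stmt3_general μ μ' ℓ hℓ env η hmeas_env hmeas hiid_env hiid J hJ
end

section
/- Under the stationary product measure Q on {0,1}^ℤ with Q(ω_t = 1) = 1/2, for every k and every integer j ≥ 1, Q(diam(B^k(0)) ≥ j·β_k) ≤ 6 j e^{−j}, where β_k = 2^{ℓ_k}. -/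
/-!
Let `N(lo, hi)` be the event that no occurrence of `I_ℓ` ends in `[lo, hi)`, and `q = 1 - 2^{-ℓ}`.
Since `I_ℓ` cannot overlap itself, an occurrence ending at `hi` together with `N(lo, hi + 1 - ℓ)`
implies `N(lo, hi)`, and these two events depend on disjoint sets of coordinates. Hence

  `P N(lo, hi + 1) = P N(lo, hi) - P (N(lo, hi) ∩ {occurrence ending at hi})`
  `               ≤ P N(lo, hi) - 2^{-ℓ} P N(lo, hi + 1 - ℓ) ≤ q P N(lo, hi)`,

so `P N(lo, lo + k) ≤ q^k`. If the block of `0` has length at least `M = j 2^ℓ`, then either no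
occurrence ends in `[1 - M, 0]`, or its left end `b ∈ [1 - M, 0]` is an occurrence followed by
`N(b + ℓ, b + M)`. The probability is thus at most `q^M + M 2^{-ℓ} q^{M - ℓ} ≤ 3 j e^{-j}`, as
`q^M ≤ e^{-j}` and `q^ℓ ≥ 1/2`.
-/

open MeasureTheory

open ProbabilityTheory

section Independence

variable {Ω ι β : Type*} {f : ι → Ω → β} {S : Finset ι} {P : (ι → β) → Prop}

theorem setOf_eq_preimage_image_of_dependsOn (hP : DependsOn P S) :
    {ω | P fun i => f i ω} = (fun ω (i : S) => f i ω) ⁻¹'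
      ((fun ω (i : S) => f i ω) '' {ω | P fun i => f i ω}) := by
  refine (Set.subset_preimage_image _ _).antisymm ?_
  rintro ω ⟨ω', hω', heq⟩
  exact cast (hP fun i hi => congrFun heq ⟨i, hi⟩) hω'

variable [MeasurableSpace Ω] {μ : Measure Ω}

theorem iIndepFun_of_measure_cylinder [IsProbabilityMeasure μ] {f : ι → Ω → Bool}
    (hf : ∀ i, Measurable (f i))
    (hcyl : ∀ (s : Finset ι) (b : ι → Bool),
      μ {ω | ∀ i ∈ s, f i ω = b i} = (1 / 2 : ENNReal) ^ s.card) :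
    iIndepFun f μ := by
  classical
  refine iIndepFun_iff_finset.2 fun s => ?_
  rw [iIndepFun_iff_map_fun_eq_pi_map (f := s.restrict f) fun i => (hf i).aemeasurable]
  simp only [Finset.restrict]
  refine Measure.ext_of_singleton fun x => ?_
  have hfs : Measurable fun ω (i : s) => f i ω := measurable_pi_lambda _ fun i => hf i
  have hpoint : ∀ i : s, μ.map (f i) {x i} = 1 / 2 := by
    intro i
    rw [Measure.map_apply (hf i) (measurableSet_singleton _)]
    simpa [Set.preimage] using hcyl {i.1} fun _ => x i
  rw [Measure.pi_singleton, Finset.prod_congr rfl fun i _ => hpoint i, Finset.prod_const,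
    Finset.card_univ, Fintype.card_coe, Measure.map_apply hfs (measurableSet_singleton _),
    ← hcyl s fun i => if h : i ∈ s then x ⟨i, h⟩ else false]
  congr 1
  ext ω
  simp only [Set.mem_preimage, Set.mem_singleton_iff, funext_iff, Subtype.forall,
    Set.mem_ofPred_eq]
  exact forall₂_congr fun i hi => by rw [dif_pos hi]

variable [MeasurableSpace β] [Countable β] [MeasurableSingletonClass β]

theorem measurableSet_setOf_of_dependsOn_s4 (hf : ∀ i, Measurable (f i)) (hP : DependsOn P S) :
    MeasurableSet {ω | P fun i => f i ω} := by
  rw [setOf_eq_preimage_image_of_dependsOn hP]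
  exact measurable_pi_lambda (fun ω (i : S) => f i ω) (fun i => hf i)
    (Set.to_countable _).measurableSet

theorem measure_inter_eq_mul_of_dependsOn (hind : iIndepFun f μ) (hf : ∀ i, Measurable (f i))
    {T : Finset ι} (hST : Disjoint S T) {Q : (ι → β) → Prop}
    (hP : DependsOn P S) (hQ : DependsOn Q T) :
    μ ({ω | P fun i => f i ω} ∩ {ω | Q fun i => f i ω}) =
      μ {ω | P fun i => f i ω} * μ {ω | Q fun i => f i ω} := by
  rw [setOf_eq_preimage_image_of_dependsOn hP, setOf_eq_preimage_image_of_dependsOn hQ]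
  exact (hind.indepFun_finset S T hST hf).measure_inter_preimage_eq_mul _ _
    (Set.to_countable _).measurableSet (Set.to_countable _).measurableSet

end Independence

section Occurrences

variable (ℓ : ℕ)

def NoOccEndIn (e : ℤ → Bool) (lo hi : ℤ) : Prop :=
  ∀ c, lo ≤ c → c < hi → ¬ occEnd ℓ e c

def LongBlockAtZero (e : ℤ → Bool) (m : ℤ) : Prop :=
  ∃ b b' : ℤ, occEnd ℓ e b ∧ occEnd ℓ e b' ∧ b ≤ 0 ∧ 0 < b' ∧
    (∀ c, b < c → c < b' → ¬ occEnd ℓ e c) ∧ m ≤ b' - b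

variable {ℓ}

theorem dependsOn_occEnd (c : ℤ) :
    DependsOn (fun e => occEnd ℓ e c) (Finset.Ico (c + 1 - ℓ) (c + 1) : Set ℤ) := by
  intro x y hxy
  refine propext (forall₂_congr fun i hi => ?_)
  rw [hxy _ (by simp; omega)]

theorem dependsOn_noOccEndIn (lo hi : ℤ) :
    DependsOn (fun e => NoOccEndIn ℓ e lo hi) (Finset.Ico (lo + 1 - ℓ) hi : Set ℤ) := by
  intro x y hxy
  refine propext (forall_congr' fun c => imp_congr_right fun hlo => imp_congr_right fun hhi => ?_)
  exact not_congr (iff_of_eq (dependsOn_occEnd c fun i hi => hxy i (by simp at hi ⊢; omega)))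

theorem not_occEnd_of_occEnd {e : ℤ → Bool} {c c' : ℤ} (hc : occEnd ℓ e c) (h₁ : c - ℓ < c')
    (h₂ : c' < c) : ¬ occEnd ℓ e c' := by
  intro hc'
  have hzero := hc' (ℓ - 1) (by omega)
  have hone := hc (c' - (c - ℓ + 1)).toNat (by omega)
  rw [show c' - ℓ + 1 + ((ℓ - 1 : ℕ) : ℤ) = c' by omega] at hzero
  rw [show c - ℓ + 1 + ((c' - (c - ℓ + 1)).toNat : ℤ) = c' by omega, hzero] at hone
  simp at hone
  omega

theorem LongBlockAtZero.noOccEndIn_or_exists_occEnd {e : ℤ → Bool} {M : ℕ}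
    (h : LongBlockAtZero ℓ e M) (hℓ : 1 ≤ ℓ) :
    NoOccEndIn ℓ e (1 - M) 1 ∨
      ∃ b ∈ Finset.Icc (1 - M : ℤ) 0, occEnd ℓ e b ∧ NoOccEndIn ℓ e (b + ℓ) (b + M) := by
  obtain ⟨b, b', hb, -, hb0, hb'0, hgap, hlen⟩ := h
  by_cases hfar : b ≤ -M
  · exact Or.inl fun c h₁ h₂ => hgap c (by omega) (by omega)
  · exact Or.inr ⟨b, Finset.mem_Icc.2 ⟨by omega, hb0⟩, hb,
      fun c h₁ h₂ => hgap c (by omega) (by omega)⟩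

end Occurrences

section Probability

variable {Ω : Type*} [MeasurableSpace Ω] {μ : Measure Ω} {ℓ : ℕ}
  {env : ℤ → Ω → Bool} (hmeas : ∀ i, Measurable (env i))
  (hcyl : ∀ (s : Finset ℤ) (b : ℤ → Bool),
    μ {ω | ∀ i ∈ s, env i ω = b i} = (1 / 2 : ENNReal) ^ s.card)
include hcyl

theorem measure_occEnd (c : ℤ) : μ {ω | occEnd ℓ (fun t => env t ω) c} = (1 / 2) ^ ℓ := by
  have hcyl' := hcyl (Finset.Ico (c + 1 - ℓ) (c + 1)) fun t => decide (t < c)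
  rw [show (Finset.Ico (c + 1 - ℓ) (c + 1)).card = ℓ by simp [Int.card_Ico]] at hcyl'
  rw [← hcyl']
  congr 1
  ext ω
  simp only [Set.mem_ofPred_eq, Finset.mem_Ico, occEnd]
  constructor
  · intro h t ht
    have h' := h (t - (c - ℓ + 1)).toNat (by omega)
    rw [show c - ℓ + 1 + ((t - (c - ℓ + 1)).toNat : ℤ) = t by omega] at h'
    rw [h']
    exact decide_eq_decide.2 (by omega)
  · intro h i hi
    rw [h _ ⟨by omega, by omega⟩]
    exact decide_eq_decide.2 (by omega)

variable [IsProbabilityMeasure μ]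
include hmeas

theorem measureReal_occEnd_inter_noOccEndIn {c lo hi : ℤ} (h : hi ≤ c + 1 - ℓ ∨ c + ℓ ≤ lo) :
    μ.real ({ω | occEnd ℓ (fun t => env t ω) c} ∩ {ω | NoOccEndIn ℓ (fun t => env t ω) lo hi}) =
      2⁻¹ ^ ℓ * μ.real {ω | NoOccEndIn ℓ (fun t => env t ω) lo hi} := by
  have hdisj : Disjoint (Finset.Ico (c + 1 - ℓ) (c + 1)) (Finset.Ico (lo + 1 - ℓ) hi) := by
    simp only [Finset.disjoint_left, Finset.mem_Ico]
    omega
  simp only [measureReal_def]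
  rw [measure_inter_eq_mul_of_dependsOn (iIndepFun_of_measure_cylinder hmeas hcyl) hmeas hdisj
    (dependsOn_occEnd c) (dependsOn_noOccEndIn lo hi), measure_occEnd hcyl, ENNReal.toReal_mul]
  simp

theorem measureReal_noOccEndIn_succ_le (hℓ : 1 ≤ ℓ) {lo hi : ℤ} (hlo : lo ≤ hi) :
    μ.real {ω | NoOccEndIn ℓ (fun t => env t ω) lo (hi + 1)} ≤
      (1 - 2⁻¹ ^ ℓ) * μ.real {ω | NoOccEndIn ℓ (fun t => env t ω) lo hi} := by
  set N := fun hi => {ω | NoOccEndIn ℓ (fun t => env t ω) lo hi}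
  set O := {ω | occEnd ℓ (fun t => env t ω) hi}
  have hsplit : N (hi + 1) = N hi \ O := by
    ext ω
    simp only [N, O, NoOccEndIn, Set.mem_sdiff, Set.mem_ofPred_eq]
    constructor
    · intro h
      exact ⟨fun c h₁ h₂ => h c h₁ (by omega), h hi hlo (by omega)⟩
    · rintro ⟨h, hO⟩ c h₁ h₂
      rcases (show c < hi ∨ c = hi by omega) with h₂ | rfl
      exacts [h c h₁ h₂, hO]
  have hsub : O ∩ N (hi + 1 - ℓ) ⊆ N hi ∩ O := fun ω ⟨hO, hN⟩ =>
    ⟨fun c h₁ h₂ => if hc : c < hi + 1 - ℓ then hN c h₁ hc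
      else not_occEnd_of_occEnd hO (by omega) h₂, hO⟩
  have hmono : N hi ⊆ N (hi + 1 - ℓ) := fun ω h c h₁ h₂ => h c h₁ (by omega)
  have hO : MeasurableSet O := measurableSet_setOf_of_dependsOn_s4 hmeas (dependsOn_occEnd hi)
  calc μ.real (N (hi + 1)) = μ.real (N hi) - μ.real (N hi ∩ O) := by
        rw [hsplit]
        exact eq_sub_of_add_eq (measureReal_sdiff_add_inter hO)
    _ ≤ μ.real (N hi) - μ.real (O ∩ N (hi + 1 - ℓ)) :=
        sub_le_sub_left (measureReal_mono hsub) _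
    _ = μ.real (N hi) - 2⁻¹ ^ ℓ * μ.real (N (hi + 1 - ℓ)) := by
        rw [measureReal_occEnd_inter_noOccEndIn hmeas hcyl (Or.inl le_rfl)]
    _ ≤ μ.real (N hi) - 2⁻¹ ^ ℓ * μ.real (N hi) :=
        sub_le_sub_left (mul_le_mul_of_nonneg_left (measureReal_mono hmono) (by positivity)) _
    _ = (1 - 2⁻¹ ^ ℓ) * μ.real (N hi) := by ring

theorem measureReal_noOccEndIn_le (hℓ : 1 ≤ ℓ) (lo : ℤ) (k : ℕ) :
    μ.real {ω | NoOccEndIn ℓ (fun t => env t ω) lo (lo + k)} ≤ (1 - 2⁻¹ ^ ℓ) ^ k := by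
  induction k with
  | zero => simp [measureReal_le_one]
  | succ k ih =>
    have hq : (0 : ℝ) ≤ 1 - 2⁻¹ ^ ℓ := sub_nonneg.2 (pow_le_one₀ (by norm_num) (by norm_num))
    calc _ ≤ (1 - 2⁻¹ ^ ℓ) * μ.real {ω | NoOccEndIn ℓ (fun t => env t ω) lo (lo + k)} := by
          rw [Nat.cast_succ, ← add_assoc]
          exact measureReal_noOccEndIn_succ_le hmeas hcyl hℓ (by omega)
      _ ≤ (1 - 2⁻¹ ^ ℓ) * (1 - 2⁻¹ ^ ℓ) ^ k := by gcongr
      _ = (1 - 2⁻¹ ^ ℓ) ^ (k + 1) := by ring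

theorem measureReal_longBlockAtZero_le (hℓ : 1 ≤ ℓ) {M : ℕ} (hM : ℓ ≤ M) :
    μ.real {ω | LongBlockAtZero ℓ (fun t => env t ω) M} ≤
      (1 - 2⁻¹ ^ ℓ) ^ M + M * (2⁻¹ ^ ℓ * (1 - 2⁻¹ ^ ℓ) ^ (M - ℓ)) := by
  have hcover : {ω | LongBlockAtZero ℓ (fun t => env t ω) M} ⊆
      {ω | NoOccEndIn ℓ (fun t => env t ω) (1 - M) 1} ∪
        ⋃ b ∈ Finset.Icc (1 - M : ℤ) 0, {ω | occEnd ℓ (fun t => env t ω) b} ∩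
          {ω | NoOccEndIn ℓ (fun t => env t ω) (b + ℓ) (b + M)} := by
    intro ω hω
    rcases hω.noOccEndIn_or_exists_occEnd hℓ with h | ⟨b, hb, hocc, hN⟩
    · exact Or.inl h
    · exact Or.inr (Set.mem_biUnion hb ⟨hocc, hN⟩)
  have hfar : μ.real {ω | NoOccEndIn ℓ (fun t => env t ω) (1 - M) 1} ≤ (1 - 2⁻¹ ^ ℓ) ^ M := by
    simpa using measureReal_noOccEndIn_le hmeas hcyl hℓ (1 - M) M
  have hnear : ∀ b : ℤ, μ.real ({ω | occEnd ℓ (fun t => env t ω) b} ∩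
      {ω | NoOccEndIn ℓ (fun t => env t ω) (b + ℓ) (b + M)}) ≤
        2⁻¹ ^ ℓ * (1 - 2⁻¹ ^ ℓ) ^ (M - ℓ) := by
    intro b
    rw [measureReal_occEnd_inter_noOccEndIn hmeas hcyl (by omega)]
    gcongr
    have h := measureReal_noOccEndIn_le hmeas hcyl hℓ (b + ℓ) (M - ℓ)
    rwa [show b + ℓ + ((M - ℓ : ℕ) : ℤ) = b + M by omega] at h
  calc _ ≤ _ := measureReal_mono hcover
    _ ≤ _ := measureReal_union_le _ _
    _ ≤ _ := add_le_add hfar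
      ((measureReal_biUnion_finset_le _ _).trans (Finset.sum_le_sum fun b _ => hnear b))
    _ = _ := by simp [Int.card_Icc]

end Probability

theorem self_le_mul_two_pow (ℓ : ℕ) {j : ℕ} (hj : 1 ≤ j) : ℓ ≤ j * 2 ^ ℓ :=
  Nat.lt_two_pow_self.le.trans (Nat.le_mul_of_pos_left _ hj)

theorem one_sub_inv_two_pow_pow_le_exp (ℓ : ℕ) {j : ℕ} (hj : 1 ≤ j) :
    (1 - (2 : ℝ)⁻¹ ^ ℓ) ^ (j * 2 ^ ℓ) ≤ Real.exp (-j) := by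
  have hj' : (0 : ℝ) < j := by exact_mod_cast hj
  have h := Real.one_sub_div_pow_le_exp_neg (n := j * 2 ^ ℓ) (t := j)
    (by push_cast; exact le_mul_of_one_le_right hj'.le (one_le_pow₀ (by norm_num)))
  convert h using 3
  push_cast
  field_simp
  rw [← mul_pow]
  norm_num

theorem two_mul_le_two_pow (n : ℕ) : 2 * n ≤ 2 ^ n := by
  cases n with
  | zero => simp
  | succ n => rw [pow_succ']; exact Nat.mul_le_mul_left 2 Nat.lt_two_pow_self

theorem half_le_one_sub_inv_two_pow_pow (ℓ : ℕ) : 1 / 2 ≤ (1 - (2 : ℝ)⁻¹ ^ ℓ) ^ ℓ := by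
  have hℓ : (2 * ℓ : ℝ) ≤ 2 ^ ℓ := by exact_mod_cast two_mul_le_two_pow ℓ
  have hp : (2 : ℝ) ^ ℓ * 2⁻¹ ^ ℓ = 1 := by rw [← mul_pow]; norm_num
  have hbernoulli := one_add_mul_le_pow (a := -(2 : ℝ)⁻¹ ^ ℓ)
    (by linarith [pow_le_one₀ (n := ℓ) (by norm_num : (0 : ℝ) ≤ 2⁻¹) (by norm_num)]) ℓ
  rw [← sub_eq_add_neg] at hbernoulli
  nlinarith [pow_nonneg (by norm_num : (0 : ℝ) ≤ 2⁻¹) ℓ]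

theorem tail_le_six_mul_exp (ℓ : ℕ) {j : ℕ} (hj : 1 ≤ j) :
    (1 - (2 : ℝ)⁻¹ ^ ℓ) ^ (j * 2 ^ ℓ) +
        j * 2 ^ ℓ * (2⁻¹ ^ ℓ * (1 - 2⁻¹ ^ ℓ) ^ (j * 2 ^ ℓ - ℓ)) ≤
      6 * j * Real.exp (-j) := by
  set q : ℝ := 1 - 2⁻¹ ^ ℓ
  set M := j * 2 ^ ℓ
  have hM : ℓ ≤ M := self_le_mul_two_pow ℓ hj
  have hq : 0 ≤ q := sub_nonneg.2 (pow_le_one₀ (by norm_num) (by norm_num))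
  have hj' : (1 : ℝ) ≤ j := by exact_mod_cast hj
  have hshift : q ^ (M - ℓ) ≤ 2 * q ^ M := by
    rw [← Nat.sub_add_cancel hM, pow_add, Nat.add_sub_cancel]
    have hhalf : 1 / 2 ≤ q ^ ℓ := half_le_one_sub_inv_two_pow_pow ℓ
    nlinarith [pow_nonneg hq (M - ℓ)]
  have hexp : q ^ M ≤ Real.exp (-j) := one_sub_inv_two_pow_pow_le_exp ℓ hj
  calc q ^ M + j * 2 ^ ℓ * (2⁻¹ ^ ℓ * q ^ (M - ℓ)) = q ^ M + j * q ^ (M - ℓ) := by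
        rw [mul_assoc, ← mul_assoc (2 ^ ℓ), ← mul_pow]
        norm_num
    _ ≤ 3 * j * q ^ M := by nlinarith [pow_nonneg hq M]
    _ ≤ 6 * j * Real.exp (-j) := by nlinarith [pow_nonneg hq M]

/-- Tail bound for the diameter of the block containing the origin:
`Q(diam(B^k(0)) ≥ j·β_k) ≤ 6 j e^{-j}` where `β_k = 2^{ℓ}`.  The block containing
the origin is the interval `[b, b'-1]` between two successive occurrence right
endpoints `b ≤ 0 < b'` of the word `I_ℓ`. -/
theorem stmt4 {Ω : Type} [MeasurableSpace Ω]
    (μ : Measure Ω) [IsProbabilityMeasure μ]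
    (ℓ : ℕ) (hℓ : 1 ≤ ℓ)
    (env : ℤ → Ω → Bool) (hmeas_env : ∀ i, Measurable (env i))
    (hiid_env : ∀ (s : Finset ℤ) (b : ℤ → Bool),
      μ {ω | ∀ i ∈ s, env i ω = b i} = (1 / 2 : ENNReal) ^ s.card)
    (j : ℕ) (hj : 1 ≤ j) :
    μ {ω | ∃ b b' : ℤ, occEnd ℓ (fun t => env t ω) b ∧ occEnd ℓ (fun t => env t ω) b' ∧
        b ≤ 0 ∧ 0 < b' ∧ (∀ c, b < c → c < b' → ¬ occEnd ℓ (fun t => env t ω) c) ∧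
        (j * 2 ^ ℓ : ℤ) ≤ b' - b}
      ≤ ENNReal.ofReal (6 * j * Real.exp (-(j : ℝ))) := by
  have hbound := measureReal_longBlockAtZero_le hmeas_env hiid_env hℓ (self_le_mul_two_pow ℓ hj)
  push_cast at hbound
  change μ {ω | LongBlockAtZero ℓ (fun t => env t ω) (j * 2 ^ ℓ)} ≤ _
  rw [← ofReal_measureReal]
  exact ENNReal.ofReal_le_ofReal (hbound.trans (tail_le_six_mul_exp ℓ hj))
end

section
/- Let (η_i) be i.i.d. Bernoulli(1/2) and let T^{k−1}, T^k be the first-occurrence times of the patterns I_{k−1} and I_k (I_j = (1,…,1,0) of length ℓ_j, ℓ_{k−1} < ℓ_k). Then for every t ≥ ℓ_k, P(T^{k−1} = T^k = t) = β_k^{−1} P(T^{k−1} > t − ℓ_k), where β_k = 2^{ℓ_k}. Consequently P(T^{k−1} = T^k) = β_k^{−1} E[T^{k−1}]. -/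
open MeasureTheory

open ProbabilityTheory
open scoped ENNReal

-- The word `I_ℓ` ends at position `j`: `e` reads `1` on `(j - ℓ, j)` and `0` at `j`.
def OccursAt (ℓ : ℕ) (e : ℕ → Bool) (j : ℕ) : Prop :=
  ℓ ≤ j ∧ ∀ m ∈ Finset.Ioc (j - ℓ) j, e m = decide (m < j)

theorem firstOcc_eq_sInf (ℓ : ℕ) (e : ℕ → Bool) :
    firstOcc ℓ e = sInf {j | OccursAt ℓ e j} := by
  refine congrArg sInf (Set.ext fun j =>
    and_congr_right fun hj => ⟨fun h m hm => ?_, fun h i hi => ?_⟩)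
  · rw [Finset.mem_Ioc] at hm
    have := h (m - (j - ℓ + 1)) (by omega)
    rw [show j - ℓ + 1 + (m - (j - ℓ + 1)) = m by omega] at this
    rw [this, decide_eq_decide]
    omega
  · rw [h _ (Finset.mem_Ioc.2 (by omega)), decide_eq_decide]
    omega

theorem OccursAt.of_le {ℓ ℓ' j : ℕ} {e : ℕ → Bool} (h : OccursAt ℓ e j) (hℓ : ℓ' ≤ ℓ) :
    OccursAt ℓ' e j :=
  ⟨hℓ.trans h.1, fun m hm => h.2 m (Finset.Ioc_subset_Ioc_left (by omega) hm)⟩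

theorem OccursAt.not_occursAt_of_lt_of_lt {ℓ ℓ' t j : ℕ} {e : ℕ → Bool} (h : OccursAt ℓ e t)
    (hℓ' : 1 ≤ ℓ') (hj : t - ℓ < j) (hjt : j < t) : ¬ OccursAt ℓ' e j := fun h' => by
  have hone := h.2 j (Finset.mem_Ioc.2 ⟨hj, hjt.le⟩)
  have hzero := h'.2 j (Finset.mem_Ioc.2 ⟨by omega, le_rfl⟩)
  simp [hjt, hone] at hzero

theorem dependsOn_occursAt (ℓ j : ℕ) :
    DependsOn (fun e => OccursAt ℓ e j) ↑(Finset.Ioc (j - ℓ) j) := fun e e' h =>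
  propext <| and_congr_right fun _ => forall₂_congr fun m hm => by rw [h m hm]

theorem dependsOn_forall_le_not_occursAt (ℓ m : ℕ) :
    DependsOn (fun e => ∀ j ≤ m, ¬ OccursAt ℓ e j) ↑(Finset.Iic m) := fun e e' h =>
  propext <| forall₂_congr fun j hj => not_congr <| Iff.of_eq <|
    dependsOn_occursAt ℓ j fun i hi => h i (by simp at hi ⊢; omega)

theorem firstOcc_eq_iff {ℓ t : ℕ} {e : ℕ → Bool} (ht : t ≠ 0) :
    firstOcc ℓ e = t ↔ OccursAt ℓ e t ∧ ∀ j < t, ¬ OccursAt ℓ e j := by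
  rw [firstOcc_eq_sInf]
  constructor
  · rintro rfl
    exact ⟨Nat.sInf_mem (Nat.nonempty_of_pos_sInf (Nat.pos_of_ne_zero ht)),
      fun j => Nat.notMem_of_lt_sInf⟩
  · rintro ⟨hocc, hbefore⟩
    exact le_antisymm (Nat.sInf_le hocc)
      (not_lt.1 fun h => hbefore _ h (Nat.sInf_mem (s := {j | OccursAt ℓ e j}) ⟨t, hocc⟩))

theorem lt_firstOcc_iff {ℓ m : ℕ} {e : ℕ → Bool} :
    m < firstOcc ℓ e ↔ (∀ j ≤ m, ¬ OccursAt ℓ e j) ∧ ¬ ∀ j, ¬ OccursAt ℓ e j := by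
  rw [firstOcc_eq_sInf]
  constructor
  · intro h
    refine ⟨fun j hj => Nat.notMem_of_lt_sInf (hj.trans_lt h), fun hnever => ?_⟩
    have hempty : {j | OccursAt ℓ e j} = ∅ := Set.eq_empty_of_forall_notMem hnever
    rw [hempty, Nat.sInf_empty] at h
    exact Nat.not_lt_zero m h
  · rintro ⟨hnone, hsome⟩
    push Not at hsome
    exact not_le.1 fun h => hnone _ h (Nat.sInf_mem hsome)

-- A value below `ℓ` can only be the junk value `sInf ∅ = 0`.
theorem forall_not_occursAt_of_firstOcc_lt {ℓ : ℕ} {e : ℕ → Bool} (h : firstOcc ℓ e < ℓ) :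
    ∀ j, ¬ OccursAt ℓ e j := fun j hj =>
  h.not_ge <| by
    rw [firstOcc_eq_sInf]
    exact (Nat.sInf_mem (s := {j | OccursAt ℓ e j}) ⟨j, hj⟩).1

theorem firstOcc_eq_and_firstOcc_eq_iff {ℓ₁ ℓ₂ t : ℕ} {e : ℕ → Bool} (h1 : 1 ≤ ℓ₁)
    (h12 : ℓ₁ ≤ ℓ₂) (ht : ℓ₂ ≤ t) :
    firstOcc ℓ₁ e = t ∧ firstOcc ℓ₂ e = t ↔
      (∀ j ≤ t - ℓ₂, ¬ OccursAt ℓ₁ e j) ∧ OccursAt ℓ₂ e t := by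
  rw [firstOcc_eq_iff (by omega), firstOcc_eq_iff (by omega)]
  constructor
  · rintro ⟨⟨-, hbefore⟩, hocc, -⟩
    exact ⟨fun j hj => hbefore j (by omega), hocc⟩
  · rintro ⟨hbefore, hocc⟩
    have hbefore' : ∀ j < t, ¬ OccursAt ℓ₁ e j := fun j hj =>
      if h : j ≤ t - ℓ₂ then hbefore j h
      else hocc.not_occursAt_of_lt_of_lt h1 (by omega) hj
    exact ⟨⟨hocc.of_le h12, hbefore'⟩, hocc, fun j hj h => hbefore' j hj (h.of_le h12)⟩

section Independence

variable {Ω ι β : Type*} [MeasurableSpace Ω] {μ : Measure Ω} [MeasurableSpace β] [Countable β]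
  [MeasurableSingletonClass β] {X : ι → Ω → β}

theorem iIndepFun_of_measure_forall_eq_prod [IsProbabilityMeasure μ]
    (hX : ∀ i, Measurable (X i))
    (h : ∀ (s : Finset ι) (b : s → β),
      μ {ω | ∀ i : s, X i ω = b i} = ∏ i : s, μ {ω | X i ω = b i}) :
    iIndepFun X μ := by
  refine iIndepFun_iff_finset.2 fun s =>
    (iIndepFun_iff_map_fun_eq_pi_map (f := s.restrict X) fun i => (hX i).aemeasurable).2 ?_
  refine Measure.ext_of_singleton fun b => ?_
  rw [Measure.map_apply (measurable_pi_lambda (fun ω i => s.restrict X i ω) fun i => hX i)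
    (measurableSet_singleton b),
    ← Set.univ_pi_singleton b, Measure.pi_pi]
  calc μ _ = μ {ω | ∀ i : s, X i ω = b i} := by
        congr 1
        ext
        simp
    _ = ∏ i : s, μ {ω | X i ω = b i} := h s b
    _ = _ := Finset.prod_congr rfl fun i _ =>
        (Measure.map_apply (hX i) (measurableSet_singleton _)).symm

theorem measure_and_eq_mul_of_dependsOn (hind : iIndepFun X μ) (hX : ∀ i, Measurable (X i))
    {s u : Finset ι} (hsu : Disjoint s u) {P Q : (ι → β) → Prop} (hP : DependsOn P ↑s)
    (hQ : DependsOn Q ↑u) :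
    μ {ω | P (fun i => X i ω) ∧ Q (fun i => X i ω)}
      = μ {ω | P (fun i => X i ω)} * μ {ω | Q (fun i => X i ω)} := by
  obtain ⟨g, rfl⟩ := dependsOn_iff_exists_comp.1 hP
  obtain ⟨h, rfl⟩ := dependsOn_iff_exists_comp.1 hQ
  exact (hind.indepFun_finset s u hsu hX).measure_inter_preimage_eq_mul
    ({y | g y} : Set (s → β)) ({y | h y} : Set (u → β)) .of_discrete .of_discrete

theorem measurableSet_of_dependsOn (hX : ∀ i, Measurable (X i)) {s : Finset ι}
    {P : (ι → β) → Prop} (hP : DependsOn P ↑s) : MeasurableSet {ω | P (fun i => X i ω)} := by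
  obtain ⟨g, rfl⟩ := dependsOn_iff_exists_comp.1 hP
  exact (s.measurable_restrict.comp (measurable_pi_lambda _ hX))
    (.of_discrete : MeasurableSet ({y | g y} : Set (s → β)))

end Independence

theorem lintegral_natCast_eq_tsum_measure_lt {α : Type*} [MeasurableSpace α] (μ : Measure α)
    {f : α → ℕ} (hf : Measurable f) :
    ∫⁻ x, (f x : ℝ≥0∞) ∂μ = ∑' n : ℕ, μ {x | n < f x} := by
  have hsum : ∀ x, (f x : ℝ≥0∞) = ∑' n : ℕ, {x | n < f x}.indicator 1 x := fun x => by
    rw [tsum_eq_sum (s := Finset.range (f x)) fun n hn => by simp_all]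
    simp [Set.indicator_apply, Finset.filter_true_of_mem fun n hn => Finset.mem_range.1 hn]
  have hmeas : ∀ n : ℕ, MeasurableSet {x | n < f x} := fun n => hf (measurableSet_Ioi (a := n))
  simp_rw [hsum]
  rw [lintegral_tsum (f := fun n => {x | n < f x}.indicator 1) fun n =>
    (measurable_const.indicator (hmeas n)).aemeasurable]
  simp [lintegral_indicator_one (hmeas _)]

theorem measurable_firstOcc {Ω : Type*} [MeasurableSpace Ω] {η : ℕ → Ω → Bool}
    (hmeas : ∀ i, Measurable (η i)) (ℓ : ℕ) :
    Measurable fun ω => firstOcc ℓ (fun i => η i ω) := by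
  refine measurable_of_Ioi fun m => ?_
  have hocc : ∀ j, MeasurableSet {ω | OccursAt ℓ (fun i => η i ω) j} := fun j =>
    measurableSet_of_dependsOn hmeas (dependsOn_occursAt ℓ j)
  have : (fun ω => firstOcc ℓ (fun i => η i ω)) ⁻¹' Set.Ioi m
      = {ω | ∀ j ≤ m, ¬ OccursAt ℓ (fun i => η i ω) j}
        \ {ω | ∀ j, ¬ OccursAt ℓ (fun i => η i ω) j} :=
    Set.ext fun ω => lt_firstOcc_iff
  have hnever : MeasurableSet {ω | ∀ j, ¬ OccursAt ℓ (fun i => η i ω) j} := by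
    simp only [Set.ofPred_forall]
    exact .iInter fun j => (hocc j).compl
  rw [this]
  exact (measurableSet_of_dependsOn hmeas (dependsOn_forall_le_not_occursAt ℓ m)).diff hnever

section FairCoins

variable {Ω : Type*} [MeasurableSpace Ω] {μ : Measure Ω} {η : ℕ → Ω → Bool}
  (hmeas : ∀ i, Measurable (η i))
  (hiid : ∀ (s : Finset ℕ) (b : ℕ → Bool),
    μ {ω | ∀ i ∈ s, η i ω = b i} = (1 / 2 : ℝ≥0∞) ^ s.card)

include hmeas hiid in
theorem iIndepFun_of_measure_forall_mem_eq_half_pow [IsProbabilityMeasure μ] : iIndepFun η μ := by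
  have hcyl : ∀ (s : Finset ℕ) (b : s → Bool),
      μ {ω | ∀ i : s, η i ω = b i} = (1 / 2 : ℝ≥0∞) ^ s.card := fun s b => by
    rw [← hiid s fun i => if h : i ∈ s then b ⟨i, h⟩ else false]
    congr 1
    ext ω
    simp only [Set.mem_ofPred_eq, Subtype.forall]
    exact forall₂_congr fun i hi => by rw [dif_pos hi]
  refine iIndepFun_of_measure_forall_eq_prod hmeas fun s b => ?_
  have hone : ∀ i : s, μ {ω | η i ω = b i} = 1 / 2 := fun i => by
    simpa using hcyl {i.1} fun _ => b i
  rw [hcyl s b, Finset.prod_congr rfl fun i _ => hone i]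
  simp

include hiid in
theorem measure_occursAt {ℓ j : ℕ} (hj : ℓ ≤ j) :
    μ {ω | OccursAt ℓ (fun i => η i ω) j} = (1 / 2 : ℝ≥0∞) ^ ℓ := by
  simp only [OccursAt, hj, true_and]
  rw [hiid, Nat.card_Ioc, Nat.sub_sub_self hj]

include hmeas hiid in
theorem measure_forall_le_add_not_occursAt_le_mul [IsProbabilityMeasure μ] (ℓ m : ℕ) :
    μ {ω | ∀ j ≤ m + ℓ, ¬ OccursAt ℓ (fun i => η i ω) j}
      ≤ μ {ω | ∀ j ≤ m, ¬ OccursAt ℓ (fun i => η i ω) j} * (1 - (1 / 2 : ℝ≥0∞) ^ ℓ) := by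
  have hlast : DependsOn (fun e => ¬ OccursAt ℓ e (m + ℓ)) ↑(Finset.Ioc m (m + ℓ)) :=
    fun e e' h => congrArg Not (dependsOn_occursAt ℓ (m + ℓ) (by rwa [Nat.add_sub_cancel]))
  calc μ {ω | ∀ j ≤ m + ℓ, ¬ OccursAt ℓ (fun i => η i ω) j}
      ≤ μ {ω | (∀ j ≤ m, ¬ OccursAt ℓ (fun i => η i ω) j) ∧
          ¬ OccursAt ℓ (fun i => η i ω) (m + ℓ)} :=
        measure_mono fun ω h => ⟨fun j hj => h j (by omega), h _ le_rfl⟩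
    _ = μ {ω | ∀ j ≤ m, ¬ OccursAt ℓ (fun i => η i ω) j} * (1 - (1 / 2 : ℝ≥0∞) ^ ℓ) := by
        rw [measure_and_eq_mul_of_dependsOn (iIndepFun_of_measure_forall_mem_eq_half_pow hmeas hiid)
            hmeas (Finset.Iic_disjoint_Ioc le_rfl) (dependsOn_forall_le_not_occursAt ℓ m) hlast,
          ← Set.compl_ofPred,
          prob_compl_eq_one_sub (measurableSet_of_dependsOn hmeas (dependsOn_occursAt ℓ _)),
          measure_occursAt hiid (by omega)]

include hmeas hiid in
theorem measure_forall_not_occursAt [IsProbabilityMeasure μ] (ℓ : ℕ) :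
    μ {ω | ∀ j, ¬ OccursAt ℓ (fun i => η i ω) j} = 0 := by
  have hblocks : ∀ N, μ {ω | ∀ j ≤ N * ℓ, ¬ OccursAt ℓ (fun i => η i ω) j}
      ≤ (1 - (1 / 2 : ℝ≥0∞) ^ ℓ) ^ N := by
    intro N
    induction N with
    | zero => simpa using prob_le_one
    | succ N ih =>
      rw [Nat.succ_mul, pow_succ]
      exact (measure_forall_le_add_not_occursAt_le_mul hmeas hiid ℓ _).trans (by gcongr)
  have hlt : 1 - (1 / 2 : ℝ≥0∞) ^ ℓ < 1 :=
    ENNReal.sub_lt_self ENNReal.one_ne_top one_ne_zero (pow_ne_zero _ (by norm_num))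
  refine le_antisymm (ge_of_tendsto' (ENNReal.tendsto_pow_atTop_nhds_zero_of_lt_one hlt)
    fun N => le_trans (measure_mono ?_) (hblocks N)) bot_le
  exact fun ω h j _ => h j

include hmeas hiid in
theorem measure_lt_firstOcc [IsProbabilityMeasure μ] (ℓ m : ℕ) :
    μ {ω | m < firstOcc ℓ (fun i => η i ω)}
      = μ {ω | ∀ j ≤ m, ¬ OccursAt ℓ (fun i => η i ω) j} := by
  have : {ω | m < firstOcc ℓ (fun i => η i ω)}
      = {ω | ∀ j ≤ m, ¬ OccursAt ℓ (fun i => η i ω) j}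
        \ {ω | ∀ j, ¬ OccursAt ℓ (fun i => η i ω) j} :=
    Set.ext fun ω => lt_firstOcc_iff
  rw [this, measure_sdiff_null (measure_forall_not_occursAt hmeas hiid ℓ)]

include hmeas hiid in
theorem measure_firstOcc_eq_and_firstOcc_eq [IsProbabilityMeasure μ] {ℓ₁ ℓ₂ t : ℕ}
    (h1 : 1 ≤ ℓ₁) (h12 : ℓ₁ ≤ ℓ₂) (ht : ℓ₂ ≤ t) :
    μ {ω | firstOcc ℓ₁ (fun i => η i ω) = t ∧ firstOcc ℓ₂ (fun i => η i ω) = t}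
      = (1 / 2 : ℝ≥0∞) ^ ℓ₂ * μ {ω | t - ℓ₂ < firstOcc ℓ₁ (fun i => η i ω)} := by
  simp_rw [firstOcc_eq_and_firstOcc_eq_iff h1 h12 ht]
  rw [measure_and_eq_mul_of_dependsOn (iIndepFun_of_measure_forall_mem_eq_half_pow hmeas hiid)
      hmeas (Finset.Iic_disjoint_Ioc le_rfl) (dependsOn_forall_le_not_occursAt ℓ₁ _)
      (dependsOn_occursAt ℓ₂ t),
    measure_occursAt hiid ht, measure_lt_firstOcc hmeas hiid, mul_comm]

include hmeas hiid in
theorem measure_firstOcc_eq_firstOcc [IsProbabilityMeasure μ] {ℓ₁ ℓ₂ : ℕ} (h1 : 1 ≤ ℓ₁)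
    (h12 : ℓ₁ ≤ ℓ₂) :
    μ {ω | firstOcc ℓ₁ (fun i => η i ω) = firstOcc ℓ₂ (fun i => η i ω)}
      = (1 / 2 : ℝ≥0∞) ^ ℓ₂ * ∫⁻ ω, (firstOcc ℓ₁ (fun i => η i ω) : ℝ≥0∞) ∂μ := by
  set T₁ := fun ω => firstOcc ℓ₁ (fun i => η i ω)
  set T₂ := fun ω => firstOcc ℓ₂ (fun i => η i ω)
  have hunion : {ω | T₁ ω = T₂ ω} = ⋃ t, {ω | T₁ ω = t ∧ T₂ ω = t} := by
    ext ω
    refine ⟨fun h => Set.mem_iUnion.2 ⟨T₂ ω, h, rfl⟩, fun h => ?_⟩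
    obtain ⟨t, h₁, h₂⟩ := Set.mem_iUnion.1 h
    exact h₁.trans h₂.symm
  have hmeas_eq : ∀ t, MeasurableSet {ω | T₁ ω = t ∧ T₂ ω = t} := fun t =>
    (measurable_firstOcc hmeas ℓ₁ (measurableSet_singleton t)).inter
      (measurable_firstOcc hmeas ℓ₂ (measurableSet_singleton t))
  have hearly : ∀ t < ℓ₂, μ {ω | T₁ ω = t ∧ T₂ ω = t} = 0 := fun t ht =>
    measure_mono_null (fun ω h => forall_not_occursAt_of_firstOcc_lt (h.2.trans_lt ht))
      (measure_forall_not_occursAt hmeas hiid ℓ₂)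
  have hdisj : Pairwise (Function.onFun Disjoint fun t => {ω | T₁ ω = t ∧ T₂ ω = t}) :=
    fun t t' htt' => Set.disjoint_left.2 fun ω h h' => htt' (h.1.symm.trans h'.1)
  rw [hunion, measure_iUnion hdisj hmeas_eq,
    ← ENNReal.summable.sum_add_tsum_nat_add' (k := ℓ₂),
    Finset.sum_eq_zero fun t ht => hearly t (Finset.mem_range.1 ht), zero_add,
    lintegral_natCast_eq_tsum_measure_lt μ (measurable_firstOcc hmeas ℓ₁),
    ← ENNReal.tsum_mul_left]
  refine tsum_congr fun m => ?_
  rw [measure_firstOcc_eq_and_firstOcc_eq hmeas hiid h1 h12 (Nat.le_add_left ℓ₂ m),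
    Nat.add_sub_cancel]

end FairCoins

/-- For the first occurrence times `T^{k-1}`, `T^k` of the nested patterns
`I_{ℓ₁}`, `I_{ℓ₂}` (`ℓ₁ < ℓ₂`): for every `t ≥ ℓ₂`,
`P(T^{k-1} = T^k = t) = β_k^{-1} P(T^{k-1} > t - ℓ₂)` with `β_k = 2^{ℓ₂}`,
and consequently `P(T^{k-1} = T^k) = β_k^{-1} E[T^{k-1}]`. -/
theorem stmt6 {Ω : Type} [MeasurableSpace Ω] (μ : Measure Ω) [IsProbabilityMeasure μ]
    (ℓ₁ ℓ₂ : ℕ) (h1 : 1 ≤ ℓ₁) (h12 : ℓ₁ < ℓ₂)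
    (η : ℕ → Ω → Bool) (hmeas : ∀ i, Measurable (η i))
    (hiid : ∀ (s : Finset ℕ) (b : ℕ → Bool),
      μ {ω | ∀ i ∈ s, η i ω = b i} = (1 / 2 : ENNReal) ^ s.card) :
    (∀ t : ℕ, ℓ₂ ≤ t →
      μ {ω | firstOcc ℓ₁ (fun i => η i ω) = t ∧ firstOcc ℓ₂ (fun i => η i ω) = t}
        = (1 / 2 : ENNReal) ^ ℓ₂ * μ {ω | t - ℓ₂ < firstOcc ℓ₁ (fun i => η i ω)}) ∧
    (μ {ω | firstOcc ℓ₁ (fun i => η i ω) = firstOcc ℓ₂ (fun i => η i ω)}).toReal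
      = ((2 : ℝ) ^ ℓ₂)⁻¹ * ∫ ω, (firstOcc ℓ₁ (fun i => η i ω) : ℝ) ∂μ := by
  refine ⟨fun t ht => measure_firstOcc_eq_and_firstOcc_eq hmeas hiid h1 h12.le ht, ?_⟩
  have hT₁ : AEMeasurable (fun ω => (firstOcc ℓ₁ (fun i => η i ω) : ℝ≥0∞)) μ :=
    (measurable_from_nat.comp (measurable_firstOcc hmeas ℓ₁)).aemeasurable
  rw [measure_firstOcc_eq_firstOcc hmeas hiid h1 h12.le, ENNReal.toReal_mul,
    ← integral_toReal hT₁ (ae_of_all _ fun _ => ENNReal.natCast_lt_top _)]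
  simp
end

section
/- For Q-almost every environment ω and every t ∈ ℤ, the scale k_t := inf{k ≥ k_* : t is not k-active} is finite. -/
open MeasureTheory

/-- Number of right endpoints of occurrences of `I_ℓ` in the interval `[a, t]`. -/
noncomputable def countOcc (ℓ : ℕ) (e : ℤ → Bool) (a t : ℤ) : ℕ :=
  ((Finset.Icc a t).filter
    (fun c => ∀ i ∈ Finset.range ℓ, e (c - ℓ + 1 + i) = decide (i < ℓ - 1))).card

/-- The scale-`k` word length `ℓ_k = ⌈(1+ε)^k⌉`. -/
noncomputable def lenScale (ε : ℝ) (k : ℕ) : ℕ := ⌈(1 + ε) ^ k⌉₊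

/-- `β_k = 2^{ℓ_k}` as a real number. -/
noncomputable def betaScale (ε : ℝ) (k : ℕ) : ℝ := 2 ^ lenScale ε k

/-- `ν_k = β_k / β_{k-1}`. -/
noncomputable def nuScale (ε : ℝ) (k : ℕ) : ℝ := betaScale ε k / betaScale ε (k - 1)

/-- `a` is the left endpoint of the `ℓ`-block containing `t`: the last occurrence
right endpoint of `I_ℓ` at or before `t`. -/
def leftEnd (ℓ : ℕ) (e : ℤ → Bool) (t a : ℤ) : Prop :=
  occEnd ℓ e a ∧ a ≤ t ∧ ∀ c, a < c → c ≤ t → ¬ occEnd ℓ e c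

/-- `t` is `k`-active in the environment `e`: for every scale `j ∈ {k_*, …, k}`,
`t` lies in the beginning of its `j`-block and within distance `β_{j+1}` of its
left endpoint.  (At the lowest scale `k_*` the beginning is the set of points at
distance at most `β_{k_*}^{1+ε}` from the left endpoint.) -/
noncomputable def isActive (ε : ℝ) (kstar k : ℕ) (e : ℤ → Bool) (t : ℤ) : Prop :=
  ∀ j, kstar ≤ j → j ≤ k →
    ∃ a : ℤ, leftEnd (lenScale ε j) e t a ∧
      ((t : ℝ) - a < betaScale ε (j + 1)) ∧
      (if j = kstar then ((t : ℝ) - a ≤ (betaScale ε kstar) ^ (1 + ε))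
       else countOcc (lenScale ε (j - 1)) e (a + 1) t < ⌊(nuScale ε j) ^ ((1 : ℝ) - ε)⌋₊)

/-!
Only one scale at a time is needed. If `t` is `(k+1)`-active, an occurrence of `I_L`,
`L = ℓ_{k+1}`, ends at some `a` with `t - a < 2 ^ ℓ_{k+2}`, and fewer than
`N = ⌊ν_{k+1} ^ (1-ε)⌋` occurrences of `I_ℓ`, `ℓ = ℓ_k`, end in `(a, t]`. Either `a` is
within `N r ℓ` of `t`, which costs `N r ℓ 2 ^ (-L)` by a union bound over `a`; or, cutting the
stretch after `a` into `N` runs of `r` consecutive `ℓ`-blocks, one run contains no occurrence of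
`I_ℓ`, which by independence costs `2 ^ ℓ_{k+2} N 2 ^ (-L) (1 - 2 ^ (-ℓ)) ^ r`. With
`r = 2 ^ ℓ ℓ_{k+2}` both terms are at most `(ℓ_{k+2} ℓ_k + 1) 2 ^ (-ε (ℓ_{k+1} - ℓ_k))`,
and this tends to `0` because `ℓ_{k+1} - ℓ_k` grows geometrically. Being active at every scale is
thus a null event.
-/

open Filter Topology

section PatternEvent

variable {ι Ω : Type*} (X : ι → Ω → Bool)

def patternEvent (T : Finset ι) (b : ι → Bool) : Set Ω := {ω | ∀ i ∈ T, X i ω = b i}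

variable {X}

lemma patternEvent_inter_patternEvent [DecidableEq ι] {T T' : Finset ι} (h : Disjoint T T')
    (b b' : ι → Bool) :
    patternEvent X T b ∩ patternEvent X T' b' =
      patternEvent X (T ∪ T') (T'.piecewise b' b) := by
  ext ω
  simp only [patternEvent, Set.mem_inter_iff, Set.mem_ofPred_eq, Finset.mem_union]
  refine ⟨fun ⟨hb, hb'⟩ i hi => ?_, fun hω => ⟨fun i hi => ?_, fun i hi => ?_⟩⟩
  · by_cases hiT' : i ∈ T'
    · simp [hiT', hb' i hiT']
    · simp [hiT', hb i (hi.resolve_right hiT')]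
  · simpa [Finset.disjoint_left.mp h hi] using hω i (.inl hi)
  · simpa [hi] using hω i (.inr hi)

variable [MeasurableSpace Ω]

lemma measurableSet_patternEvent (hX : ∀ i, Measurable (X i)) (T : Finset ι) (b : ι → Bool) :
    MeasurableSet (patternEvent X T b) := by
  simp only [patternEvent, Set.ofPred_forall]
  exact .biInter T.countable_toSet fun i _ => hX i (measurableSet_singleton (b i))

/-- Under `μ`, the family `X` has the law `Q` of i.i.d. fair bits. -/
def IsFairCoins (μ : Measure Ω) (X : ι → Ω → Bool) : Prop :=
  ∀ (T : Finset ι) (b : ι → Bool), μ (patternEvent X T b) = (1 / 2 : ENNReal) ^ T.card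

variable {μ : Measure Ω} [IsFiniteMeasure μ]

lemma measureReal_patternEvent_inter_iInter_compl (hX : ∀ i, Measurable (X i))
    (hfair : IsFairCoins μ X) (blk : ℕ → Finset ι) (pat : ℕ → ι → Bool) (r : ℕ)
    (hblk : ∀ i j, i < j → j < r → Disjoint (blk i) (blk j))
    (T : Finset ι) (b : ι → Bool) (hT : ∀ i < r, Disjoint T (blk i)) :
    μ.real (patternEvent X T b ∩ ⋂ i ∈ Finset.range r, (patternEvent X (blk i) (pat i))ᶜ)
      = (1 / 2 : ℝ) ^ T.card * ∏ i ∈ Finset.range r, (1 - (1 / 2 : ℝ) ^ (blk i).card) := by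
  classical
  induction r generalizing T b with
  | zero => simp [measureReal_def, hfair T b]
  | succ r ih =>
    have hblk' : ∀ i j, i < j → j < r → Disjoint (blk i) (blk j) :=
      fun i j hij hj => hblk i j hij (by omega)
    have hTr : Disjoint T (blk r) := hT r (by omega)
    set S := fun (T : Finset ι) (b : ι → Bool) =>
      patternEvent X T b ∩ ⋂ i ∈ Finset.range r, (patternEvent X (blk i) (pat i))ᶜ
    -- Avoiding the pattern on `blk r` is `S T b` minus meeting it, a pattern on `T ∪ blk r`.
    have hsplit :
        patternEvent X T b ∩ ⋂ i ∈ Finset.range (r + 1), (patternEvent X (blk i) (pat i))ᶜ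
          = S T b \ S (T ∪ blk r) ((blk r).piecewise (pat r) b) := by
      simp only [S]
      rw [← patternEvent_inter_patternEvent hTr, Finset.range_add_one, Finset.set_biInter_insert]
      ext ω
      simp only [Set.mem_inter_iff, Set.mem_sdiff, Set.mem_compl_iff]
      tauto
    have hsub : S (T ∪ blk r) ((blk r).piecewise (pat r) b) ⊆ S T b := by
      simp only [S]
      rw [← patternEvent_inter_patternEvent hTr]
      exact Set.inter_subset_inter_left _ Set.inter_subset_left
    have hmeas : MeasurableSet (S (T ∪ blk r) ((blk r).piecewise (pat r) b)) :=
      (measurableSet_patternEvent hX _ _).inter <| .biInter (Finset.range r).countable_toSet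
        fun i _ => (measurableSet_patternEvent hX _ _).compl
    have hdisj : ∀ i < r, Disjoint (T ∪ blk r) (blk i) := fun i hi =>
      Finset.disjoint_union_left.mpr ⟨hT i (by omega), (hblk i r hi (by omega)).symm⟩
    rw [hsplit, measureReal_sdiff hsub hmeas, ih hblk' T b (fun i hi => hT i (by omega)),
      ih hblk' _ _ hdisj, Finset.card_union_of_disjoint hTr, Finset.prod_range_succ]
    ring

end PatternEvent

lemma occEnd_iff_forall_mem_Icc (ℓ : ℕ) (e : ℤ → Bool) (c : ℤ) :
    occEnd ℓ e c ↔ ∀ s ∈ Finset.Icc (c - ℓ + 1) c, e s = decide (s < c) := by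
  refine ⟨fun h s hs => ?_, fun h i hi => ?_⟩
  · rw [Finset.mem_Icc] at hs
    obtain ⟨i, hi, rfl⟩ : ∃ i : ℕ, i < ℓ ∧ s = c - ℓ + 1 + i :=
      ⟨(s - (c - ℓ + 1)).toNat, by omega, by omega⟩
    rw [h i hi]
    exact decide_eq_decide.mpr (by omega)
  · rw [h _ (Finset.mem_Icc.mpr (by omega))]
    exact decide_eq_decide.mpr (by omega)

/-- `a + (n + 1) * ℓ` is the right end of the `n`-th `ℓ`-block after `a`; the blocks are grouped
into runs of `r`, and the `N` runs fit into `(a, t]`. -/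
lemma exists_run_forall_not_occEnd {ℓ N r : ℕ} (hℓ : 0 < ℓ) {e : ℤ → Bool} {a t : ℤ}
    (hfar : a + (N * r * ℓ : ℕ) ≤ t) (hcount : countOcc ℓ e (a + 1) t < N) :
    ∃ g < N, ∀ j < r, ¬ occEnd ℓ e (a + ((g * r + j + 1) * ℓ : ℕ)) := by
  by_contra! h
  choose! f hf_lt hf_occ using h
  refine hcount.not_ge ?_
  have hle : ∀ g < N, g * r + f g + 1 ≤ N * r := fun g hg => by
    nlinarith [hf_lt g hg]
  have hdiv : ∀ g < N, (g * r + f g) / r = g := fun g hg => by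
    rw [add_comm, Nat.add_mul_div_right _ _ (by linarith [hf_lt g hg]),
      Nat.div_eq_of_lt (hf_lt g hg), zero_add]
  calc N = (Finset.range N).card := (Finset.card_range N).symm
    _ ≤ countOcc ℓ e (a + 1) t := by
      refine Finset.card_le_card_of_injOn (fun g => a + ((g * r + f g + 1) * ℓ : ℕ))
        (fun g hg => ?_) (fun g₁ hg₁ g₂ hg₂ heq => ?_)
      · rw [Finset.coe_range, Set.mem_Iio] at hg
        have hpos : 1 ≤ (g * r + f g + 1) * ℓ := Nat.one_le_iff_ne_zero.mpr (by positivity)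
        have hbound := Nat.mul_le_mul_right ℓ (hle g hg)
        simp only [Finset.coe_filter, Finset.mem_Icc, Finset.mem_range, Set.mem_ofPred_eq]
        exact ⟨⟨by omega, by omega⟩, fun i hi => hf_occ g hg i hi⟩
      · rw [Finset.coe_range, Set.mem_Iio] at hg₁ hg₂
        have h := Nat.eq_of_mul_eq_mul_right hℓ (Nat.cast_injective (add_left_cancel heq))
        rw [← hdiv g₁ hg₁, ← hdiv g₂ hg₂]
        congr 1
        omega

lemma one_sub_half_pow_pow_le (ℓ n : ℕ) :
    (1 - (1 / 2 : ℝ) ^ ℓ) ^ (2 ^ ℓ * n) ≤ (1 / 2) ^ n := by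
  rw [pow_mul]
  gcongr
  · exact pow_nonneg (sub_nonneg.mpr (pow_le_one₀ (by norm_num) (by norm_num))) _
  · calc (1 - (1 / 2 : ℝ) ^ ℓ) ^ 2 ^ ℓ = (1 - 1 / ((2 ^ ℓ : ℕ) : ℝ)) ^ 2 ^ ℓ := by
          rw [one_div_pow]; push_cast; rfl
      _ ≤ Real.exp (-1) := Real.one_sub_div_pow_le_exp_neg (by exact_mod_cast Nat.one_le_two_pow)
      _ ≤ 1 / 2 := Real.exp_neg_one_lt_half.le

section Occurrences

variable {Ω : Type*} (X : ℤ → Ω → Bool)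

def occEvent (ℓ : ℕ) (c : ℤ) : Set Ω :=
  patternEvent X (Finset.Icc (c - ℓ + 1) c) (fun s => decide (s < c))

/-- The event that `t` lies in the beginning of a block of `I_L` that starts at `a ∈ (t - W, t]`,
the beginning being cut off after `N` occurrences of `I_ℓ`. Unlike `leftEnd`, `a` need not be
the last occurrence before `t`. -/
def beginningEvent (ℓ L W N : ℕ) (t : ℤ) : Set Ω :=
  {ω | ∃ a, occEnd L (fun s => X s ω) a ∧ a ≤ t ∧ t - a < W ∧
    countOcc ℓ (fun s => X s ω) (a + 1) t < N}

variable {X}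

lemma mem_occEvent {ℓ : ℕ} {c : ℤ} {ω : Ω} :
    ω ∈ occEvent X ℓ c ↔ occEnd ℓ (fun s => X s ω) c :=
  (occEnd_iff_forall_mem_Icc ℓ _ c).symm

lemma beginningEvent_subset {ℓ : ℕ} (hℓ : 0 < ℓ) (L W N r : ℕ) (t : ℤ) :
    beginningEvent X ℓ L W N t ⊆
      (⋃ a ∈ Finset.Ioc (t - (N * r * ℓ : ℕ)) t, occEvent X L a) ∪
      ⋃ a ∈ Finset.Ioc (t - W) t, ⋃ g ∈ Finset.range N,
        occEvent X L a ∩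
          ⋂ j ∈ Finset.range r, (occEvent X ℓ (a + ((g * r + j + 1) * ℓ : ℕ)))ᶜ := by
  rintro ω ⟨a, hocc, hat, hW, hcount⟩
  simp only [Set.mem_union, Set.mem_iUnion, Set.mem_inter_iff, Set.mem_iInter, Set.mem_compl_iff,
    Finset.mem_Ioc, Finset.mem_range, mem_occEvent, exists_prop]
  by_cases hnear : t - (N * r * ℓ : ℕ) < a
  · exact .inl ⟨a, ⟨hnear, hat⟩, hocc⟩
  · obtain ⟨g, hg, hrun⟩ := exists_run_forall_not_occEnd (r := r) hℓ (by omega) hcount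
    exact .inr ⟨a, ⟨by omega, hat⟩, g, hg, hocc, hrun⟩

variable [MeasurableSpace Ω] {μ : Measure Ω} [IsFiniteMeasure μ]

lemma measureReal_occEvent_inter_iInter_compl (hX : ∀ i, Measurable (X i)) (hfair : IsFairCoins μ X)
    (ℓ L m r : ℕ) (a : ℤ) :
    μ.real (occEvent X L a ∩
        ⋂ j ∈ Finset.range r, (occEvent X ℓ (a + ((m + j + 1) * ℓ : ℕ)))ᶜ)
      = (1 / 2 : ℝ) ^ L * (1 - (1 / 2 : ℝ) ^ ℓ) ^ r := by
  set c : ℕ → ℤ := fun j => a + ((m + j + 1) * ℓ : ℕ)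
  have hc : ∀ i j, i < j → c i + ℓ ≤ c j := fun i j hij => by
    have : (m + i + 1) * ℓ + ℓ ≤ (m + j + 1) * ℓ := by nlinarith
    simp only [c]
    omega
  have hc0 : ∀ j, a + ℓ ≤ c j := fun j => by
    have := Nat.le_mul_of_pos_left ℓ (show 0 < m + j + 1 by omega)
    simp only [c]
    omega
  have hcard : ∀ (n : ℕ) (c : ℤ), (Finset.Icc (c - n + 1) c).card = n := fun n c => by
    rw [Int.card_Icc]; omega
  refine (measureReal_patternEvent_inter_iInter_compl hX hfair
    (fun j => Finset.Icc (c j - ℓ + 1) (c j)) (fun j s => decide (s < c j)) r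
    (fun i j hij _ => Finset.disjoint_left.mpr fun s hsi hsj => by
      simp only [Finset.mem_Icc] at hsi hsj; linarith [hc i j hij])
    _ _ (fun j _ => Finset.disjoint_left.mpr fun s hsa hsj => by
      simp only [Finset.mem_Icc] at hsa hsj; linarith [hc0 j])).trans ?_
  rw [hcard, Finset.prod_congr rfl fun j _ => by rw [hcard], Finset.prod_const, Finset.card_range]

lemma measureReal_beginningEvent_le (hX : ∀ i, Measurable (X i)) (hfair : IsFairCoins μ X)
    {ℓ : ℕ} (hℓ : 0 < ℓ) (L W N r : ℕ) (t : ℤ) :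
    μ.real (beginningEvent X ℓ L W N t) ≤
      (N * r * ℓ : ℕ) * (1 / 2 : ℝ) ^ L +
        W * (N * ((1 / 2 : ℝ) ^ L * (1 - (1 / 2 : ℝ) ^ ℓ) ^ r)) := by
  have hocc : ∀ a, μ.real (occEvent X L a) = (1 / 2 : ℝ) ^ L := fun a => by
    simpa using measureReal_occEvent_inter_iInter_compl hX hfair ℓ L 0 0 a
  refine (measureReal_mono (beginningEvent_subset hℓ L W N r t)).trans <|
    (measureReal_union_le _ _).trans <| add_le_add ?_ ?_
  · refine (measureReal_biUnion_finset_le _ _).trans_eq ?_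
    simp only [hocc, Finset.sum_const, Int.card_Ioc, sub_sub_cancel, Int.toNat_natCast,
      nsmul_eq_mul]
  · refine (measureReal_biUnion_finset_le _ _).trans ?_
    refine (Finset.sum_le_sum fun a _ => measureReal_biUnion_finset_le _ _).trans_eq ?_
    simp only [measureReal_occEvent_inter_iInter_compl hX hfair, Finset.sum_const,
      Finset.card_range, Int.card_Ioc, sub_sub_cancel, Int.toNat_natCast, nsmul_eq_mul]

/-- The choice `r = 2 ^ ℓ * L'` makes a run of `r` blocks miss `I_ℓ` with probability at most
`2 ^ (-L')`, which pays for the `2 ^ L'` positions of `a`. -/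
lemma measureReal_beginningEvent_le_rpow (hX : ∀ i, Measurable (X i)) (hfair : IsFairCoins μ X)
    {ε : ℝ} {ℓ L L' N : ℕ} (hℓ : 0 < ℓ)
    (hN : (N : ℝ) ≤ 2 ^ ((1 - ε) * ((L : ℝ) - ℓ))) (t : ℤ) :
    μ.real (beginningEvent X ℓ L (2 ^ L') N t) ≤
      (L' * ℓ + 1) * 2 ^ (-(ε * ((L : ℝ) - ℓ))) := by
  have hdensity : N * 2 ^ ℓ * (1 / 2 : ℝ) ^ L ≤ 2 ^ (-(ε * ((L : ℝ) - ℓ))) := by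
    have h2 : (2 : ℝ) ^ ℓ * (1 / 2) ^ L = 2 ^ (-((L : ℝ) - ℓ)) := by
      rw [neg_sub, Real.rpow_sub two_pos, Real.rpow_natCast, Real.rpow_natCast, one_div_pow,
        mul_one_div]
    calc N * 2 ^ ℓ * (1 / 2 : ℝ) ^ L = N * (2 ^ ℓ * (1 / 2) ^ L) := mul_assoc _ _ _
      _ ≤ 2 ^ ((1 - ε) * ((L : ℝ) - ℓ)) * 2 ^ (-((L : ℝ) - ℓ)) := by
        rw [h2]; gcongr
      _ = 2 ^ (-(ε * ((L : ℝ) - ℓ))) := by rw [← Real.rpow_add two_pos]; ring_nf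
  have hL' : ((2 ^ L' : ℕ) : ℝ) * (1 / 2) ^ L' = 1 := by
    rw [Nat.cast_pow, Nat.cast_ofNat, ← mul_pow]; norm_num
  refine (measureReal_beginningEvent_le hX hfair hℓ L _ N (2 ^ ℓ * L') t).trans ?_
  calc ((N * (2 ^ ℓ * L') * ℓ : ℕ) : ℝ) * (1 / 2) ^ L +
        ((2 ^ L' : ℕ) : ℝ) * (N * ((1 / 2) ^ L * (1 - (1 / 2) ^ ℓ) ^ (2 ^ ℓ * L')))
      ≤ (N * 2 ^ ℓ * (1 / 2 : ℝ) ^ L) * (L' * ℓ) +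
        ((2 ^ L' : ℕ) : ℝ) * (N * ((1 / 2) ^ L * (1 / 2) ^ L')) := by
        push_cast
        gcongr ?_ + _ * (_ * (_ * ?_))
        · exact le_of_eq (by ring)
        · exact one_sub_half_pow_pow_le ℓ L'
    _ = (N * 2 ^ ℓ * (1 / 2 : ℝ) ^ L) * (L' * ℓ) + N * (1 / 2 : ℝ) ^ L := by
        linear_combination (N * (1 / 2 : ℝ) ^ L) * hL'
    _ ≤ (N * 2 ^ ℓ * (1 / 2 : ℝ) ^ L) * (L' * ℓ) + N * 2 ^ ℓ * (1 / 2 : ℝ) ^ L := by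
        gcongr
        exact le_mul_of_one_le_right N.cast_nonneg (one_le_pow₀ one_le_two)
    _ = (L' * ℓ + 1) * (N * 2 ^ ℓ * (1 / 2 : ℝ) ^ L) := by ring
    _ ≤ (L' * ℓ + 1) * 2 ^ (-(ε * ((L : ℝ) - ℓ))) := by gcongr

end Occurrences

section Scales

variable {ε : ℝ}

noncomputable def scaleBound (ε : ℝ) (k : ℕ) : ℝ :=
  ((lenScale ε (k + 2) : ℝ) * lenScale ε k + 1) *
    2 ^ (-(ε * ((lenScale ε (k + 1) : ℝ) - lenScale ε k)))

lemma lenScale_pos (hε : 0 < ε) (k : ℕ) : 0 < lenScale ε k := Nat.ceil_pos.mpr (by positivity)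

lemma pow_le_lenScale (ε : ℝ) (k : ℕ) : (1 + ε) ^ k ≤ lenScale ε k := Nat.le_ceil _

lemma lenScale_le (hε : 0 < ε) (k : ℕ) : (lenScale ε k : ℝ) ≤ (1 + ε) ^ k + 1 :=
  (Nat.ceil_lt_add_one (by positivity)).le

lemma natFloor_nuScale_rpow_le (ε : ℝ) (k : ℕ) :
    (⌊nuScale ε (k + 1) ^ (1 - ε)⌋₊ : ℝ) ≤
      2 ^ ((1 - ε) * ((lenScale ε (k + 1) : ℝ) - lenScale ε k)) := by
  have hν : nuScale ε (k + 1) = 2 ^ ((lenScale ε (k + 1) : ℝ) - lenScale ε k) := by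
    rw [nuScale, betaScale, betaScale, Nat.add_sub_cancel, Real.rpow_sub two_pos,
      Real.rpow_natCast, Real.rpow_natCast]
  rw [hν, ← Real.rpow_mul zero_le_two, mul_comm]
  exact Nat.floor_le (by positivity)

lemma scaleBound_le (hε : 0 < ε) (k : ℕ) :
    scaleBound ε k ≤ (2 * ((1 + ε) ^ 2 + 1) + 1) * 2 ^ ε *
      (((1 + ε) ^ k) ^ (2 : ℝ) * Real.exp (-(ε ^ 2 * Real.log 2) * (1 + ε) ^ k)) := by
  set x := (1 + ε) ^ k
  have hx : 1 ≤ x := one_le_pow₀ (by linarith)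
  have hℓ := lenScale_le hε k
  have hL := pow_le_lenScale ε (k + 1)
  have hL' := lenScale_le hε (k + 2)
  rw [pow_succ] at hL
  rw [pow_add] at hL'
  have hpoly :
      (lenScale ε (k + 2) : ℝ) * lenScale ε k + 1 ≤ (2 * ((1 + ε) ^ 2 + 1) + 1) * x ^ 2 :=
    calc (lenScale ε (k + 2) : ℝ) * lenScale ε k + 1
        ≤ ((1 + ε) ^ 2 + 1) * x * (2 * x) + x ^ 2 := by
          gcongr
          · nlinarith
          · linarith
          · nlinarith
      _ = _ := by ring
  have hexp : (2 : ℝ) ^ (-(ε * ((lenScale ε (k + 1) : ℝ) - lenScale ε k)))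
      ≤ 2 ^ ε * Real.exp (-(ε ^ 2 * Real.log 2) * x) :=
    calc (2 : ℝ) ^ (-(ε * ((lenScale ε (k + 1) : ℝ) - lenScale ε k)))
        ≤ 2 ^ (ε + -(ε ^ 2 * x)) :=
          Real.rpow_le_rpow_of_exponent_le one_le_two (by nlinarith)
      _ = _ := by
          rw [Real.rpow_add two_pos, Real.rpow_def_of_pos two_pos (-(ε ^ 2 * x))]
          ring_nf
  rw [scaleBound, Real.rpow_two]
  calc _ ≤ (2 * ((1 + ε) ^ 2 + 1) + 1) * x ^ 2 *
        (2 ^ ε * Real.exp (-(ε ^ 2 * Real.log 2) * x)) := by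
        gcongr
    _ = _ := by ring

lemma tendsto_scaleBound (hε : 0 < ε) : Tendsto (scaleBound ε) atTop (𝓝 0) := by
  have hdecay := ((tendsto_rpow_mul_exp_neg_mul_atTop_nhds_zero 2 (ε ^ 2 * Real.log 2)
    (by positivity)).const_mul ((2 * ((1 + ε) ^ 2 + 1) + 1) * 2 ^ ε)).comp
    (tendsto_pow_atTop_atTop_of_one_lt (by linarith : 1 < 1 + ε))
  rw [mul_zero] at hdecay
  exact squeeze_zero (fun k => by rw [scaleBound]; positivity) (scaleBound_le hε) hdecay

lemma setOf_isActive_subset_beginningEvent {Ω : Type*} (X : ℤ → Ω → Bool) {kstar k : ℕ}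
    (hk : kstar ≤ k) (t : ℤ) :
    {ω | isActive ε kstar (k + 1) (fun s => X s ω) t} ⊆
      beginningEvent X (lenScale ε k) (lenScale ε (k + 1)) (2 ^ lenScale ε (k + 2))
        ⌊nuScale ε (k + 1) ^ (1 - ε)⌋₊ t := by
  intro ω hω
  obtain ⟨a, ⟨hocc, hat, -⟩, hdist, hcount⟩ := hω (k + 1) (by omega) le_rfl
  rw [if_neg (by omega), Nat.add_sub_cancel] at hcount
  refine ⟨a, hocc, hat, ?_, hcount⟩
  rw [betaScale] at hdist
  exact_mod_cast hdist

end Scales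

/-- For `Q`-almost every environment and every `t ∈ ℤ`, the scale
`k_t = inf{k ≥ k_* : t is not k-active}` is finite; i.e. the event that `t` is
`k`-active for all `k ≥ k_*` is `Q`-null. -/
theorem stmt8 {Ω : Type} [MeasurableSpace Ω] (μ : Measure Ω) [IsProbabilityMeasure μ]
    (ε : ℝ) (hε : 0 < ε ∧ ε < 1) (kstar : ℕ) (t : ℤ)
    (env : ℤ → Ω → Bool) (hmeas : ∀ i, Measurable (env i))
    (hiid : ∀ (s : Finset ℤ) (b : ℤ → Bool),
      μ {ω | ∀ i ∈ s, env i ω = b i} = (1 / 2 : ENNReal) ^ s.card) :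
    μ {ω | ∀ k, kstar ≤ k → isActive ε kstar k (fun s => env s ω) t} = 0 := by
  obtain ⟨hε0, -⟩ := hε
  set E := {ω | ∀ k, kstar ≤ k → isActive ε kstar k (fun s => env s ω) t}
  have hbound : ∀ k ≥ kstar, μ.real E ≤ scaleBound ε k := fun k hk =>
    (measureReal_mono ((Set.ofPred_subset_ofPred.mpr fun ω hω => hω (k + 1) (by omega)).trans
      (setOf_isActive_subset_beginningEvent env hk t))).trans
    (measureReal_beginningEvent_le_rpow hmeas hiid (lenScale_pos hε0 k)
      (natFloor_nuScale_rpow_le ε k) t)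
  have hzero : μ.real E = 0 := le_antisymm
    (ge_of_tendsto (tendsto_scaleBound hε0) (eventually_atTop.mpr ⟨kstar, hbound⟩))
    measureReal_nonneg
  exact (measureReal_eq_zero_iff).mp hzero
end

section
/- Let X_1,…,X_n be i.i.d. {−1,+1}-valued random variables with E[X_i] = h where 0 < h ≤ 1/2, and let ξ = (1/n)∑X_i. Then P(ξ ≤ 0) ≥ c·e^{−h^2 n}·e^{−h√n/4} for a universal constant c > 0. -/
/-!
The number of `i` with `X i = 1` is binomial with parameters `n` and `p = (1 + h) / 2`, and
`ξ ≤ 0` as soon as it is at most `n / 2`; so it suffices to bound `∑_{k ≤ n/2} C(n,k) p^k q^(n-k)`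
(`q = (1 - h) / 2`) from below. The central term is at least `e^{-h²n} / (8√n)`, because
`C(n, n/2) ≥ 4^{n/2} / (2√n)` and `(1 - h²)^{n/2} ≥ e^{-h²n}`. Moving `j` places below the centre
costs at most a factor `2` in the binomial coefficient while `8j² ≤ n`, and a factor `2` in
`p^k q^(n-k)` while `4hj ≤ 1` (Bernoulli's inequality both times). There are at least
`min(√n, 1/h) / 4` such `j`, and `√n e^{-h√n/4} ≤ 4 min(√n, 1/h)`.
-/

open MeasureTheory Finset Real

lemma Nat.sixteen_pow_le_mul_centralBinom_sq (m : ℕ) :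
    16 ^ m ≤ (4 * m + 1) * m.centralBinom ^ 2 := by
  induction m with
  | zero => simp
  | succ k ih =>
    have key : (k + 1) * (k + 1).centralBinom = 2 * (2 * k + 1) * k.centralBinom :=
      Nat.succ_mul_centralBinom_succ k
    -- `(4k + 5)(2k + 1)² = 4(4k + 1)(k + 1)² + 1`
    refine le_of_mul_le_mul_left ?_ (pow_pos k.succ_pos 2)
    calc (k + 1) ^ 2 * 16 ^ (k + 1)
        ≤ (k + 1) ^ 2 * 16 * ((4 * k + 1) * k.centralBinom ^ 2) := by
          rw [pow_succ 16 k, mul_comm _ 16, ← mul_assoc]; gcongr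
      _ ≤ (4 * (k + 1) + 1) * (2 * (2 * k + 1) * k.centralBinom) ^ 2 := by
          nlinarith [Nat.zero_le (k.centralBinom ^ 2)]
      _ = (k + 1) ^ 2 * ((4 * (k + 1) + 1) * (k + 1).centralBinom ^ 2) := by
          rw [← key]; ring

lemma Nat.four_pow_half_le_two_mul_sqrt_mul_choose {n : ℕ} (hn : 1 ≤ n) :
    (4 : ℝ) ^ (n / 2) ≤ 2 * √n * n.choose (n / 2) := by
  have hcentral : (n / 2).centralBinom ≤ n.choose (n / 2) := by
    rw [Nat.centralBinom_eq_two_mul_choose]; exact Nat.choose_le_choose _ (by omega)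
  have hsq : (16 : ℝ) ^ (n / 2) ≤ 4 * n * (n.choose (n / 2) : ℝ) ^ 2 := by
    have h := Nat.sixteen_pow_le_mul_centralBinom_sq (n / 2)
    have h4 : 4 * (n / 2) + 1 ≤ 4 * n := by omega
    exact_mod_cast h.trans (Nat.mul_le_mul h4 (Nat.pow_le_pow_left hcentral 2))
  rw [← pow_le_pow_iff_left₀ (by positivity) (by positivity) two_ne_zero, mul_pow, mul_pow,
    sq_sqrt (by positivity), ← pow_mul, mul_comm (n / 2), pow_mul]
  norm_num
  linarith

lemma Real.exp_neg_two_mul_le_one_sub {x : ℝ} (hx0 : 0 ≤ x) (hx : x ≤ 1 / 2) :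
    exp (-(2 * x)) ≤ 1 - x := by
  rw [exp_neg, inv_le_iff_one_le_mul₀ (exp_pos _)]
  nlinarith [add_one_le_exp (2 * x)]

lemma Nat.choose_succ_mul_le_choose {n k : ℕ} {x : ℝ} (hx : x * (n - k) ≤ k + 1) :
    (n.choose (k + 1) : ℝ) * x ≤ n.choose k := by
  rcases lt_or_ge k n with hk | hk
  · have hnk : (0 : ℝ) < n - k := sub_pos.2 (by exact_mod_cast hk)
    have hrec : (n.choose (k + 1) : ℝ) * (k + 1) = n.choose k * (n - k) := by
      rw [← Nat.cast_sub hk.le]; exact_mod_cast Nat.choose_succ_right_eq n k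
    nlinarith [Nat.cast_nonneg (α := ℝ) (n.choose (k + 1))]
  · rw [Nat.choose_eq_zero_of_lt (by omega)]; simp

lemma Nat.choose_half_mul_pow_le_choose_half_sub {n j : ℕ} (hj : 4 * j ≤ n) {i : ℕ}
    (hi : i ≤ j) :
    (n.choose (n / 2) : ℝ) * (1 - 4 * j / n) ^ i ≤ n.choose (n / 2 - i) := by
  induction i with
  | zero => simp
  | succ i ih =>
    have hα : 0 ≤ 1 - 4 * (j : ℝ) / n := by
      rw [sub_nonneg, div_le_one₀ (by exact_mod_cast (show 0 < n by omega))]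
      exact_mod_cast hj
    set k := n / 2 - (i + 1)
    have hk : n / 2 - i = k + 1 := by omega
    have hstep : (1 - 4 * (j : ℝ) / n) * (n - k) ≤ k + 1 := by
      have hn : (0 : ℝ) < n := by exact_mod_cast (show 0 < n by omega)
      have h1 : (n : ℝ) ≤ 2 * k + 2 * j + 1 := by
        exact_mod_cast (show n ≤ 2 * k + 2 * j + 1 by omega)
      have h2 : (2 * k + 2 : ℝ) ≤ n := by exact_mod_cast (show 2 * k + 2 ≤ n by omega)
      rw [one_sub_div hn.ne', div_mul_eq_mul_div, div_le_iff₀ hn]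
      nlinarith [mul_nonneg hn.le (sub_nonneg.2 h1),
        mul_nonneg (Nat.cast_nonneg (α := ℝ) j) (sub_nonneg.2 h2)]
    calc (n.choose (n / 2) : ℝ) * (1 - 4 * j / n) ^ (i + 1)
        = (n.choose (n / 2) * (1 - 4 * j / n) ^ i) * (1 - 4 * j / n) := by ring
      _ ≤ n.choose (k + 1) * (1 - 4 * j / n) := by
          rw [← hk]; exact mul_le_mul_of_nonneg_right (ih (by omega)) hα
      _ ≤ n.choose k := Nat.choose_succ_mul_le_choose hstep

lemma Nat.choose_half_le_two_mul_choose_half_sub {n j : ℕ} (hj : 8 * j ^ 2 ≤ n) :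
    (n.choose (n / 2) : ℝ) ≤ 2 * n.choose (n / 2 - j) := by
  rcases j.eq_zero_or_pos with rfl | hj0
  · simp [two_mul]
  have hn : (0 : ℝ) < n := by exact_mod_cast (show 0 < n by nlinarith)
  have hbern : 1 / 2 ≤ (1 - 4 * (j : ℝ) / n) ^ j := by
    have h4j : 4 * (j : ℝ) ≤ 2 * n := by exact_mod_cast (show 4 * j ≤ 2 * n by nlinarith)
    have hj2 : 8 * (j : ℝ) ^ 2 ≤ n := by exact_mod_cast hj
    calc (1 : ℝ) / 2 ≤ 1 + j * (-(4 * j / n)) := by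
          rw [mul_neg, ← mul_div_assoc, le_add_neg_iff_add_le, ← le_sub_iff_add_le',
            div_le_iff₀ hn]
          nlinarith
      _ ≤ (1 - 4 * j / n) ^ j := by
          rw [sub_eq_add_neg]
          exact one_add_mul_le_pow (by rw [neg_le_neg_iff, div_le_iff₀ hn]; linarith) j
  have := Nat.choose_half_mul_pow_le_choose_half_sub (n := n) (j := j) (by nlinarith) le_rfl
  nlinarith [Nat.cast_nonneg (α := ℝ) (n.choose (n / 2))]

lemma one_add_pow_le_two_mul_one_sub_pow {h : ℝ} (h0 : 0 ≤ h) {j : ℕ} (hj : 4 * h * j ≤ 1) :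
    (1 + h) ^ j ≤ 2 * (1 - h) ^ j := by
  have hpos : 0 < 1 + h := by linarith
  have ha : -2 ≤ -(2 * h / (1 + h)) := by
    rw [neg_le_neg_iff, div_le_iff₀ hpos]; linarith
  have hja : j * (2 * h / (1 + h)) ≤ 2 * h * j := by
    rw [mul_div_assoc', div_le_iff₀ hpos]
    nlinarith [mul_nonneg (mul_nonneg h0 h0) (Nat.cast_nonneg (α := ℝ) j)]
  have hratio : 1 / 2 ≤ ((1 - h) / (1 + h)) ^ j := by
    calc (1 : ℝ) / 2 ≤ 1 + j * (-(2 * h / (1 + h))) := by linarith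
      _ ≤ (1 + -(2 * h / (1 + h))) ^ j := one_add_mul_le_pow ha j
      _ = ((1 - h) / (1 + h)) ^ j := by congr 1; field_simp; ring
  rw [div_pow, le_div_iff₀ (by positivity)] at hratio
  linarith

def binomWeight (p q : ℝ) (n k : ℕ) : ℝ := n.choose k * (p ^ k * q ^ (n - k))

lemma binomWeight_nonneg {p q : ℝ} (hp : 0 ≤ p) (hq : 0 ≤ q) (n k : ℕ) :
    0 ≤ binomWeight p q n k := by
  unfold binomWeight; positivity

lemma binomWeight_half_le_four_mul {h : ℝ} (h0 : 0 ≤ h) (h1 : h ≤ 1) {n j : ℕ}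
    (hj : 8 * j ^ 2 ≤ n) (hhj : 4 * h * j ≤ 1) :
    binomWeight ((1 + h) / 2) ((1 - h) / 2) n (n / 2)
      ≤ 4 * binomWeight ((1 + h) / 2) ((1 - h) / 2) n (n / 2 - j) := by
  set p := (1 + h) / 2
  set q := (1 - h) / 2
  have hp : 0 ≤ p := by positivity
  have hq : 0 ≤ q := by simp only [q]; linarith
  have hjM : j ≤ n / 2 := by
    have := Nat.le_self_pow two_ne_zero j
    omega
  have hpq : p ^ j ≤ 2 * q ^ j := by
    simp only [p, q, div_pow]
    rw [← mul_div_assoc, div_le_div_iff_of_pos_right (by positivity)]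
    exact one_add_pow_le_two_mul_one_sub_pow h0 hhj
  have hpow :
      p ^ (n / 2) * q ^ (n - n / 2) ≤ 2 * (p ^ (n / 2 - j) * q ^ (n - (n / 2 - j))) := by
    obtain ⟨i, hi⟩ : ∃ i, n / 2 = i + j := ⟨n / 2 - j, by omega⟩
    rw [hi, Nat.add_sub_cancel, show n - i = n - (i + j) + j by omega, pow_add, pow_add]
    calc p ^ i * p ^ j * q ^ (n - (i + j))
        ≤ p ^ i * (2 * q ^ j) * q ^ (n - (i + j)) := by gcongr
      _ = 2 * (p ^ i * (q ^ (n - (i + j)) * q ^ j)) := by ring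
  unfold binomWeight
  calc (n.choose (n / 2) : ℝ) * (p ^ (n / 2) * q ^ (n - n / 2))
      ≤ (2 * n.choose (n / 2 - j)) * (2 * (p ^ (n / 2 - j) * q ^ (n - (n / 2 - j)))) := by
        gcongr
        exact Nat.choose_half_le_two_mul_choose_half_sub hj
    _ = 4 * (n.choose (n / 2 - j) * (p ^ (n / 2 - j) * q ^ (n - (n / 2 - j)))) := by ring

lemma exp_div_le_binomWeight_half {n : ℕ} (hn : 1 ≤ n) {h : ℝ} (h0 : 0 ≤ h)
    (h1 : h ≤ 1 / 2) :
    exp (-h ^ 2 * n) / (8 * √n) ≤ binomWeight ((1 + h) / 2) ((1 - h) / 2) n (n / 2) := by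
  set M := n / 2
  set p := (1 + h) / 2
  set q := (1 - h) / 2
  have hq : 1 / 4 ≤ q := by simp only [q]; linarith
  have hq1 : q ≤ 1 := by simp only [q]; linarith
  have hsqrt : 0 < √(n : ℝ) := sqrt_pos.2 (by exact_mod_cast hn)
  have hexp : exp (-h ^ 2 * n) ≤ (1 - h ^ 2) ^ M := by
    calc exp (-h ^ 2 * n) ≤ exp (-(2 * h ^ 2)) ^ M := by
          rw [← exp_nat_mul, exp_le_exp]
          have : 2 * (M : ℝ) ≤ n := by exact_mod_cast Nat.mul_div_le n 2
          nlinarith [sq_nonneg h]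
      _ ≤ (1 - h ^ 2) ^ M := by
          gcongr
          exact exp_neg_two_mul_le_one_sub (sq_nonneg h) (by nlinarith)
  have hpow : (p * q) ^ M * (1 / 4) ≤ p ^ M * q ^ (n - M) := by
    rw [mul_pow, mul_assoc]
    gcongr
    calc q ^ M * (1 / 4) ≤ q ^ M * q := by gcongr
      _ ≤ q ^ (n - M) := by
          rw [← pow_succ]; exact pow_le_pow_of_le_one (by linarith) hq1 (by omega)
  calc exp (-h ^ 2 * n) / (8 * √n)
      ≤ (1 - h ^ 2) ^ M / (8 * √n) := by gcongr
    _ = 4 ^ M / (2 * √n) * ((p * q) ^ M * (1 / 4)) := by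
        rw [show p * q = (1 - h ^ 2) / 4 by simp only [p, q]; ring, div_pow]
        field_simp
        ring
    _ ≤ n.choose M * (p ^ M * q ^ (n - M)) := by
        gcongr
        rw [div_le_iff₀ (by positivity), mul_comm]
        exact Nat.four_pow_half_le_two_mul_sqrt_mul_choose hn

lemma mul_exp_neg_mul_div_four_le {a h : ℝ} (ha : 0 ≤ a) (h0 : 0 < h) :
    a * exp (-(h * a) / 4) ≤ 4 * min a (1 / h) := by
  rw [mul_min_of_nonneg _ _ (by norm_num)]
  refine le_min ?_ ?_
  · nlinarith [exp_le_one_iff.2 (show -(h * a) / 4 ≤ 0 by nlinarith), exp_pos (-(h * a) / 4)]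
  · have := (le_add_of_nonneg_right zero_le_one).trans (add_one_le_exp (h * a / 4))
    rw [neg_div, exp_neg, ← div_eq_mul_inv, div_le_iff₀ (exp_pos _), mul_one_div,
      div_mul_eq_mul_div, le_div_iff₀ h0]
    linarith

lemma exp_mul_exp_le_sum_binomWeight {n : ℕ} (hn : 1 ≤ n) {h : ℝ} (h0 : 0 < h)
    (h1 : h ≤ 1 / 2) :
    1 / 512 * exp (-h ^ 2 * n) * exp (-(h * √n) / 4)
      ≤ ∑ k ∈ range (n / 2 + 1), binomWeight ((1 + h) / 2) ((1 - h) / 2) n k := by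
  set w := binomWeight ((1 + h) / 2) ((1 - h) / 2) n
  have hw (k : ℕ) : 0 ≤ w k := binomWeight_nonneg (by positivity) (by linarith) n k
  have hsqrt : 0 < √(n : ℝ) := sqrt_pos.2 (by exact_mod_cast hn)
  set N := ⌊min √n (1 / h) / 4⌋₊
  have hN (j : ℕ) (hj : j ≤ N) : 8 * j ^ 2 ≤ n ∧ 4 * h * j ≤ 1 := by
    have hj4 : 4 * (j : ℝ) ≤ min √n (1 / h) := by
      have := (Nat.cast_le.2 hj).trans (Nat.floor_le (by positivity))
      linarith
    refine ⟨?_, ?_⟩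
    · have : 16 * (j : ℝ) ^ 2 ≤ n := by
        nlinarith [sq_sqrt (Nat.cast_nonneg (α := ℝ) n), min_le_left √n (1 / h),
          Nat.cast_nonneg (α := ℝ) j]
      exact_mod_cast (by linarith : 8 * (j : ℝ) ^ 2 ≤ n)
    · have := hj4.trans (min_le_right _ _)
      rw [le_div_iff₀ h0] at this
      linarith
  have hNM : N ≤ n / 2 := by
    have := (hN N le_rfl).1
    have := Nat.le_self_pow two_ne_zero N
    omega
  have hcount : √n * exp (-(h * √n) / 4) / 16 ≤ N + 1 := by
    have := mul_exp_neg_mul_div_four_le hsqrt.le h0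
    have := Nat.lt_floor_add_one (min √n (1 / h) / 4)
    linarith
  calc 1 / 512 * exp (-h ^ 2 * n) * exp (-(h * √n) / 4)
      = √n * exp (-(h * √n) / 4) / 16 * (exp (-h ^ 2 * n) / (8 * √n) / 4) := by
        field_simp; ring
    _ ≤ (N + 1) * (w (n / 2) / 4) := by
        gcongr
        exact exp_div_le_binomWeight_half hn h0.le h1
    _ ≤ ∑ j ∈ range (N + 1), w (n / 2 - j) := by
        have := card_nsmul_le_sum (range (N + 1)) (fun j ↦ w (n / 2 - j)) (w (n / 2) / 4)
          fun j hj ↦ by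
            obtain ⟨hj, hhj⟩ := hN j (Nat.lt_succ_iff.1 (mem_range.1 hj))
            have := binomWeight_half_le_four_mul h0.le (by linarith) hj hhj
            linarith
        simpa using this
    _ ≤ ∑ j ∈ range (n / 2 + 1), w (n / 2 - j) :=
        sum_le_sum_of_subset_of_nonneg (range_subset_range.2 (by omega)) fun j _ _ ↦ hw _
    _ = ∑ k ∈ range (n / 2 + 1), w k := by
        simpa using sum_range_reflect w (n / 2 + 1)

lemma Finset.prod_ite_mem_univ_eq_pow {ι R : Type*} [Fintype ι] [DecidableEq ι] [CommMonoid R]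
    (s : Finset ι) (a b : R) :
    ∏ i, (if i ∈ s then a else b) = a ^ #s * b ^ (Fintype.card ι - #s) := by
  rw [prod_ite, prod_const, prod_const, filter_mem_eq_inter, univ_inter, ← card_compl]
  congr
  ext; simp

lemma Finset.sum_card_le_eq_sum_choose {ι M : Type*} [Fintype ι] [AddCommMonoid M]
    (f : ℕ → M) (m : ℕ) :
    ∑ s : Finset ι with #s ≤ m, f #s = ∑ k ∈ range (m + 1), (Fintype.card ι).choose k • f k := by
  rw [← sum_fiberwise_of_maps_to' (g := card) (t := range (m + 1)) (by simp)]
  refine sum_congr rfl fun k hk ↦ ?_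
  have : ({s : Finset ι | #s ≤ m} : Finset _).filter (#· = k) = powersetCard k univ := by
    ext s; simp at hk ⊢; omega
  rw [this, sum_const, card_powersetCard, card_univ]

namespace SignPattern
variable {Ω ι : Type*} [DecidableEq ι]

def event (X : ι → Ω → ℝ) (s : Finset ι) : Set Ω :=
  {ω | ∀ i, X i ω = if i ∈ s then 1 else -1}

variable {X : ι → Ω → ℝ}

lemma measurableSet_event [MeasurableSpace Ω] [Finite ι] (hX : ∀ i, Measurable (X i))
    (s : Finset ι) : MeasurableSet (event X s) := by
  have : event X s = ⋂ i, X i ⁻¹' {if i ∈ s then 1 else -1} := by ext; simp [event]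
  exact this ▸ .iInter fun i ↦ hX i (measurableSet_singleton _)

lemma pairwise_disjoint_event : Pairwise (Function.onFun Disjoint (event X)) := by
  intro s t hst
  refine Set.disjoint_left.2 fun ω hs ht ↦ hst (Finset.ext fun i ↦ ?_)
  have := (hs i).symm.trans (ht i)
  split_ifs at this <;> simp_all <;> norm_num at this

variable [Fintype ι]

lemma sum_eq_of_mem_event {s : Finset ι} {ω : Ω} (hω : ω ∈ event X s) :
    ∑ i, X i ω = 2 * #s - Fintype.card ι := by
  have (i : ι) : X i ω = 2 * (if i ∈ s then 1 else 0) - 1 := by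
    rw [hω i]; split_ifs <;> norm_num
  simp [this, sum_sub_distrib, mul_comm]

lemma event_subset_sum_nonpos {s : Finset ι} (hs : 2 * #s ≤ Fintype.card ι) :
    event X s ⊆ {ω | ∑ i, X i ω ≤ 0} := fun ω hω ↦ by
  rw [Set.mem_ofPred_eq, sum_eq_of_mem_event hω, sub_nonpos]; exact_mod_cast hs

lemma ofReal_sum_binomWeight_le_measure_sum_nonpos [MeasurableSpace Ω] {μ : Measure Ω}
    (hX : ∀ i, Measurable (X i)) {p q : ℝ} (hp : 0 ≤ p) (hq : 0 ≤ q)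
    (hμ : ∀ s, μ (event X s) = .ofReal (p ^ #s * q ^ (Fintype.card ι - #s))) :
    .ofReal (∑ k ∈ range (Fintype.card ι / 2 + 1), binomWeight p q (Fintype.card ι) k)
      ≤ μ {ω | ∑ i, X i ω ≤ 0} := by
  set N := Fintype.card ι
  calc ENNReal.ofReal (∑ k ∈ range (N / 2 + 1), binomWeight p q N k)
      = ∑ s : Finset ι with #s ≤ N / 2, μ (event X s) := by
        rw [sum_congr rfl fun s _ ↦ hμ s,
          ← ENNReal.ofReal_sum_of_nonneg fun s _ ↦ by positivity,
          sum_card_le_eq_sum_choose (fun k ↦ p ^ k * q ^ (N - k))]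
        simp only [nsmul_eq_mul, binomWeight]; rfl
    _ = μ (⋃ s ∈ ({s : Finset ι | #s ≤ N / 2} : Finset _), event X s) :=
        (measure_biUnion_finset (pairwise_disjoint_event.set_pairwise _)
          fun s _ ↦ measurableSet_event hX s).symm
    _ ≤ μ {ω | ∑ i, X i ω ≤ 0} :=
        measure_mono <| Set.iUnion₂_subset fun s hs ↦
          event_subset_sum_nonpos (by simp at hs; omega)

end SignPattern

/-- Lower bound for the probability that the empirical mean of `n` i.i.d. `±1`
variables with mean `h ∈ (0, 1/2]` is nonpositive: there is a universal constant
`c > 0` with `P(ξ ≤ 0) ≥ c·e^{-h²n}·e^{-h√n/4}`. -/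
theorem stmt9 :
    ∃ c : ℝ, 0 < c ∧
      ∀ {Ω : Type} [MeasurableSpace Ω] (μ : Measure Ω), ∀ _ : IsProbabilityMeasure μ,
        ∀ (n : ℕ) (_ : 1 ≤ n) (h : ℝ) (_ : 0 < h) (_ : h ≤ 1 / 2)
          (X : Fin n → Ω → ℝ) (_ : ∀ i, Measurable (X i))
          (_ : ∀ b : Fin n → Bool,
            μ {ω | ∀ i, X i ω = (if b i then 1 else -1)}
              = ∏ i, ENNReal.ofReal (if b i then (1 + h) / 2 else (1 - h) / 2)),
        ENNReal.ofReal (c * Real.exp (-h ^ 2 * n) * Real.exp (-(h * Real.sqrt n) / 4))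
          ≤ μ {ω | (1 / (n : ℝ)) * ∑ i, X i ω ≤ 0} := by
  refine ⟨1 / 512, by norm_num, fun μ _ n hn h h0 h1 X hX hXd ↦ ?_⟩
  have hevent (s : Finset (Fin n)) : μ (SignPattern.event X s)
      = .ofReal (((1 + h) / 2) ^ #s * ((1 - h) / 2) ^ (Fintype.card (Fin n) - #s)) := by
    have := hXd fun i ↦ decide (i ∈ s)
    simp only [decide_eq_true_eq] at this
    rw [SignPattern.event, this,
      ← ENNReal.ofReal_prod_of_nonneg fun i _ ↦ by split_ifs <;> linarith,
      prod_ite_mem_univ_eq_pow]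
  have hmean : {ω | (1 / (n : ℝ)) * ∑ i, X i ω ≤ 0} = {ω | ∑ i, X i ω ≤ 0} := by
    ext ω
    simp [mul_nonpos_iff_pos_imp_nonpos, show (0 : ℝ) < n by exact_mod_cast hn]
  calc ENNReal.ofReal (1 / 512 * exp (-h ^ 2 * n) * exp (-(h * √n) / 4))
      ≤ .ofReal (∑ k ∈ range (n / 2 + 1), binomWeight ((1 + h) / 2) ((1 - h) / 2) n k) :=
        ENNReal.ofReal_le_ofReal (exp_mul_exp_le_sum_binomWeight hn h0 h1)
    _ ≤ μ {ω | (1 / (n : ℝ)) * ∑ i, X i ω ≤ 0} := by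
        rw [hmean]
        simpa using SignPattern.ofReal_sum_binomWeight_le_measure_sum_nonpos hX
          (by positivity) (by linarith) hevent
end
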